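/- arXiv:math/0509151 — 6 statements merged into one kernel-verified Lean document; each statement's English description precedes it below -/
import Mathlib

section
/- Let n be a multiple of 4. Then the least eigenvalue of the adjacency matrix of Ω_n equals −(1/(n−1))·binom(n, n/2). -/
/-- Ω_n: vertices are ±1-vectors of length n (represented as `Fin n → ℤˣ`),
adjacent iff distinct and orthogonal. -/
def Omega (n : ℕ) : SimpleGraph (Fin n → ℤˣ) where
  Adj x y := x ≠ y ∧ ∑ i, ((x i : ℤ) * (y i : ℤ)) = 0
  symm := by
    constructor
    intro x y ⟨h1, h2⟩
    refine ⟨h1.symm, ?_⟩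
    rw [← h2]
    exact Finset.sum_congr rfl fun i _ => mul_comm _ _
  loopless := ⟨fun x h => h.1 rfl⟩

instance (n : ℕ) : DecidableRel (Omega n).Adj := fun x y =>
  inferInstanceAs (Decidable (x ≠ y ∧ ∑ i, ((x i : ℤ) * (y i : ℤ)) = 0))



open Finset

def Lam (n : ℕ) (S : Finset (Fin n)) : ℤ :=
  ∑ T ∈ Finset.univ.powersetCard (n / 2), (-1 : ℤ) ^ (S ∩ T).card

def Mm (n : ℕ) (i : Fin n) (S : Finset (Fin n)) : ℤ :=
  ∑ T ∈ Finset.univ.powersetCard (n / 2), if i ∈ T then (-1 : ℤ) ^ (S ∩ T).card else 0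

lemma Lam_image (n : ℕ) (σ : Equiv.Perm (Fin n)) (S : Finset (Fin n)) :
    Lam n (S.image σ) = Lam n S := by
  unfold Lam
  refine Finset.sum_nbij' (fun T => T.image σ.symm) (fun T => T.image σ) ?_ ?_ ?_ ?_ ?_
  · intro T hT
    simp only [mem_powersetCard_univ] at hT ⊢
    rw [Finset.card_image_of_injective _ σ.symm.injective]; exact hT
  · intro T hT
    simp only [mem_powersetCard_univ] at hT ⊢
    rw [Finset.card_image_of_injective _ σ.injective]; exact hT
  · intro T _; simp [Finset.image_image]
  · intro T _; simp [Finset.image_image]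
  · intro T _
    congr 1
    have h : Finset.image σ (S ∩ T.image σ.symm) = S.image σ ∩ T := by
      rw [Finset.image_inter _ _ σ.injective, Finset.image_image]; simp
    rw [← h, Finset.card_image_of_injective _ σ.injective]

lemma Mm_image (n : ℕ) (σ : Equiv.Perm (Fin n)) (i : Fin n) (S : Finset (Fin n)) :
    Mm n (σ i) (S.image σ) = Mm n i S := by
  unfold Mm
  refine Finset.sum_nbij' (fun T => T.image σ.symm) (fun T => T.image σ) ?_ ?_ ?_ ?_ ?_
  · intro T hT
    simp only [mem_powersetCard_univ] at hT ⊢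
    rw [Finset.card_image_of_injective _ σ.symm.injective]; exact hT
  · intro T hT
    simp only [mem_powersetCard_univ] at hT ⊢
    rw [Finset.card_image_of_injective _ σ.injective]; exact hT
  · intro T _; simp [Finset.image_image]
  · intro T _; simp [Finset.image_image]
  · intro T _
    have hmem : σ i ∈ T ↔ i ∈ T.image σ.symm := by
      constructor
      · intro h; exact Finset.mem_image.2 ⟨σ i, h, by simp⟩
      · intro h
        obtain ⟨a, ha, hai⟩ := Finset.mem_image.1 h
        have : a = σ i := by
          have := congrArg σ hai; simpa using this
        rwa [this] at ha
    by_cases h : σ i ∈ T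
    · rw [if_pos h, if_pos (hmem.1 h)]
      congr 1
      have hh : Finset.image σ (S ∩ T.image σ.symm) = S.image σ ∩ T := by
        rw [Finset.image_inter _ _ σ.injective, Finset.image_image]; simp
      rw [← hh, Finset.card_image_of_injective _ σ.injective]
    · rw [if_neg h, if_neg (fun hc => h (hmem.2 hc))]
open Finset
lemma exists_perm_image {α : Type*} [Fintype α] [DecidableEq α] (S S' : Finset α)
    (h : S.card = S'.card) : ∃ σ : Equiv.Perm α, S.image σ = S' := by
  classical
  have hc : (Sᶜ : Finset α).card = (S'ᶜ : Finset α).card := by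
    simp [Finset.card_compl, h]
  have e : {x // x ∈ S} ≃ {x // x ∈ S'} := Finset.equivOfCardEq h
  have ec' : {x // x ∈ (Sᶜ : Finset α)} ≃ {x // x ∈ (S'ᶜ : Finset α)} := Finset.equivOfCardEq hc
  have ec : {x // ¬ x ∈ S} ≃ {x // ¬ x ∈ S'} := by
    refine (Equiv.subtypeEquivRight ?_).trans (ec'.trans (Equiv.subtypeEquivRight ?_)) <;>
      intro x <;> simp
  refine ⟨Equiv.subtypeCongr e ec, ?_⟩
  apply Finset.eq_of_subset_of_card_le
  · intro y hy
    obtain ⟨a, ha, rfl⟩ := Finset.mem_image.1 hy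
    have : Equiv.subtypeCongr e ec a = (e ⟨a, ha⟩ : α) := by
      simp [Equiv.subtypeCongr, Equiv.sumCompl_symm_apply_of_pos ha]
    rw [this]
    exact (e ⟨a, ha⟩).2
  · rw [Finset.card_image_of_injective _ (Equiv.injective _), h]
open Finset



-- insert lemma
lemma Lam_insert {n : ℕ} {i : Fin n} {S : Finset (Fin n)} (hi : i ∉ S) :
    Lam n (insert i S) = Lam n S - 2 * Mm n i S := by
  unfold Lam Mm
  rw [Finset.mul_sum, ← Finset.sum_sub_distrib]
  refine Finset.sum_congr rfl fun T _ => ?_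
  by_cases h : i ∈ T
  · have : insert i S ∩ T = insert i (S ∩ T) := by
      rw [Finset.insert_inter_of_mem h]
    rw [this, Finset.card_insert_of_notMem (fun hc => hi (Finset.mem_inter.1 hc).1),
      pow_succ, if_pos h]
    ring
  · rw [Finset.insert_inter_of_notMem h, if_neg h]
    ring

lemma Mm_insert {n : ℕ} {i : Fin n} {S : Finset (Fin n)} (hi : i ∉ S) :
    Mm n i (insert i S) = - Mm n i S := by
  unfold Mm
  rw [← Finset.sum_neg_distrib]
  refine Finset.sum_congr rfl fun T _ => ?_
  by_cases h : i ∈ T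
  · rw [if_pos h, if_pos h]
    have : insert i S ∩ T = insert i (S ∩ T) := by rw [Finset.insert_inter_of_mem h]
    rw [this, Finset.card_insert_of_notMem (fun hc => hi (Finset.mem_inter.1 hc).1), pow_succ]
    ring
  · simp [h]

lemma sum_Mm {n : ℕ} (S : Finset (Fin n)) :
    ∑ i, Mm n i S = (n / 2 : ℕ) * Lam n S := by
  unfold Mm Lam
  rw [Finset.sum_comm, Finset.mul_sum]
  refine Finset.sum_congr rfl fun T hT => ?_
  rw [Finset.sum_ite_mem, Finset.univ_inter, Finset.sum_const, nsmul_eq_mul]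
  rw [Finset.mem_powersetCard_univ.1 hT]

lemma Lam_odd {n : ℕ} (hev : 2 ∣ n) {S : Finset (Fin n)} (hodd : Odd S.card) :
    Lam n S = 0 := by
  have key : Lam n S = - Lam n S := by
    unfold Lam
    rw [← Finset.sum_neg_distrib]
    refine Finset.sum_nbij' (fun T => Tᶜ) (fun T => Tᶜ) ?_ ?_ ?_ ?_ ?_
    · intro T hT
      simp only [mem_powersetCard_univ] at hT ⊢
      rw [Finset.card_compl, hT, Fintype.card_fin]
      omega
    · intro T hT
      simp only [mem_powersetCard_univ] at hT ⊢
      rw [Finset.card_compl, hT, Fintype.card_fin]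
      omega
    · intro T _; simp
    · intro T _; simp
    · intro T _
      have hsplit : (S ∩ T).card + (S ∩ Tᶜ).card = S.card := by
        rw [← Finset.card_union_of_disjoint]
        · congr 1
          rw [← Finset.inter_union_distrib_left]
          simp
        · exact Finset.disjoint_left.2 fun a ha hb =>
            (Finset.mem_compl.1 (Finset.mem_inter.1 hb).2) (Finset.mem_inter.1 ha).2
      have : (-1 : ℤ) ^ (S ∩ T).card * (-1) ^ (S ∩ Tᶜ).card = (-1) ^ S.card := by
        rw [← pow_add, hsplit]
      have hS : (-1 : ℤ) ^ S.card = -1 := Odd.neg_one_pow hodd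
      rw [hS] at this
      have h2 : ((-1 : ℤ) ^ (S ∩ T).card) * ((-1) ^ (S ∩ T).card * (-1) ^ (S ∩ Tᶜ).card)
          = (-1) ^ (S ∩ T).card * (-1) := by rw [this]
      rw [← mul_assoc, ← pow_add] at h2
      have : (-1 : ℤ) ^ ((S ∩ T).card + (S ∩ T).card) = 1 := by
        rw [← two_mul, pow_mul]; norm_num
      rw [this, one_mul] at h2
      rw [h2]; ring
  omega
section REC
open Finset
variable {n : ℕ}

lemma Lam_card_eq {S S' : Finset (Fin n)} (h : S.card = S'.card) :
    Lam n S = Lam n S' := by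
  obtain ⟨σ, rfl⟩ := exists_perm_image S S' h
  exact (Lam_image n σ S).symm

lemma two_Mm_mem {S : Finset (Fin n)} (hev : 2 ∣ n) (hodd : Odd S.card)
    {j : Fin n} (hj : j ∈ S) :
    2 * Mm n j S = - Lam n (S.erase j) := by
  have h0 : Lam n S = 0 := Lam_odd hev hodd
  have he : insert j (S.erase j) = S := Finset.insert_erase hj
  have h1 : Mm n j S = - Mm n j (S.erase j) := by
    conv_lhs => rw [← he]
    exact Mm_insert (Finset.notMem_erase _ _)
  have h2 : Lam n S = Lam n (S.erase j) - 2 * Mm n j (S.erase j) := by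
    conv_lhs => rw [← he]
    exact Lam_insert (Finset.notMem_erase _ _)
  rw [h0] at h2
  rw [h1]
  linarith

lemma Lam_rec (hev : 2 ∣ n) {S : Finset (Fin n)} (hodd : Odd S.card)
    {i₀ : Fin n} (hi₀ : i₀ ∉ S) {j₀ : Fin n} (hj₀ : j₀ ∈ S) :
    ((n : ℤ) - S.card) * Lam n (insert i₀ S) = -(S.card : ℤ) * Lam n (S.erase j₀) := by
  have h0 : Lam n S = 0 := Lam_odd hev hodd
  have hsum : ∑ i, (2 * Mm n i S) = 0 := by
    rw [← Finset.mul_sum, sum_Mm, h0]; ring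
  rw [← Finset.sum_add_sum_compl S] at hsum
  have hS : ∑ j ∈ S, (2 * Mm n j S) = (S.card : ℤ) * (- Lam n (S.erase j₀)) := by
    have hc : ∀ j ∈ S, (2 * Mm n j S) = - Lam n (S.erase j₀) := fun j hj => by
      rw [two_Mm_mem hev hodd hj]
      exact congrArg _ (Lam_card_eq
        (by rw [Finset.card_erase_of_mem hj, Finset.card_erase_of_mem hj₀]))
    rw [Finset.sum_congr rfl hc, Finset.sum_const, nsmul_eq_mul]
  have hcard : S.card ≤ n := by
    have := Finset.card_le_univ S
    simpa using this
  have hSc : ∑ i ∈ Sᶜ, (2 * Mm n i S) = ((n : ℤ) - S.card) * (- Lam n (insert i₀ S)) := by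
    have hc : ∀ i ∈ Sᶜ, (2 * Mm n i S) = - Lam n (insert i₀ S) := fun i hi => by
      have hins : Lam n (insert i S) = Lam n S - 2 * Mm n i S :=
        Lam_insert (Finset.mem_compl.1 hi)
      rw [h0] at hins
      have h2 : 2 * Mm n i S = - Lam n (insert i S) := by linarith
      rw [h2]
      exact congrArg _ (Lam_card_eq
        (by rw [Finset.card_insert_of_notMem (Finset.mem_compl.1 hi),
                Finset.card_insert_of_notMem hi₀]))
    rw [Finset.sum_congr rfl hc, Finset.sum_const, nsmul_eq_mul,
      Finset.card_compl, Fintype.card_fin, Nat.cast_sub hcard]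
  rw [hS, hSc] at hsum
  linarith

end REC
section KFUN
open Finset

def lamk (n k : ℕ) : ℤ := Lam n (Finset.univ.filter fun i : Fin n => (i : ℕ) < k)

lemma card_filter_lt {n k : ℕ} (h : k ≤ n) :
    (Finset.univ.filter fun i : Fin n => (i : ℕ) < k).card = k := by
  have heq : (Finset.univ.filter fun i : Fin n => (i : ℕ) < k) = (Finset.range k).attachFin
      (fun m hm => lt_of_lt_of_le (Finset.mem_range.1 hm) h) := by
    ext i; simp [Finset.mem_attachFin]
  rw [heq, Finset.card_attachFin, Finset.card_range]

lemma card_le_n {n : ℕ} (S : Finset (Fin n)) : S.card ≤ n := by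
  simpa using Finset.card_le_univ S

lemma lam_eq_lamk {n : ℕ} (S : Finset (Fin n)) : Lam n S = lamk n S.card :=
  Lam_card_eq (by rw [card_filter_lt (card_le_n S)])

lemma lamk_card {n k : ℕ} (h : k ≤ n) :
    ∀ S : Finset (Fin n), S.card = k → Lam n S = lamk n k := by
  intro S hS
  rw [lam_eq_lamk, hS]

lemma lamk_zero (n : ℕ) : lamk n 0 = (n.choose (n / 2) : ℤ) := by
  unfold lamk Lam
  have h : (Finset.univ.filter fun i : Fin n => (i : ℕ) < 0) = ∅ := by
    ext i; simp
  rw [h]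
  simp [Finset.card_powersetCard]

lemma lamk_odd {n : ℕ} (hev : 2 ∣ n) {k : ℕ} (hk : k ≤ n) (hodd : Odd k) :
    lamk n k = 0 := by
  rw [← lamk_card hk _ (card_filter_lt hk)]
  exact Lam_odd hev (by rwa [card_filter_lt hk])

lemma lamk_rec {n : ℕ} (hev : 2 ∣ n) {k : ℕ} (hk1 : 1 ≤ k) (hkn : k + 1 ≤ n)
    (hodd : Odd k) :
    ((n : ℤ) - k) * lamk n (k + 1) = -(k : ℤ) * lamk n (k - 1) := by
  have hkn' : k ≤ n := le_trans (Nat.le_succ k) hkn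
  set S := (Finset.univ.filter fun i : Fin n => (i : ℕ) < k) with hSdef
  have hcard : S.card = k := card_filter_lt hkn'
  have hklt : k < n := hkn
  have hi₀ : (⟨k, hklt⟩ : Fin n) ∉ S := by simp [hSdef]
  have hj₀ : (⟨0, lt_of_lt_of_le hk1 hkn'⟩ : Fin n) ∈ S := by
    simp [hSdef]; omega
  have := Lam_rec hev (S := S) (by rwa [hcard]) hi₀ hj₀
  rw [hcard] at this
  rw [lamk_card hkn (insert _ S) (by rw [Finset.card_insert_of_notMem hi₀, hcard])] at this
  rw [lamk_card (le_trans (Nat.sub_le k 1) hkn') (S.erase _)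
    (by rw [Finset.card_erase_of_mem hj₀, hcard])] at this
  exact this

lemma lamk_identity {n : ℕ} (hev : 2 ∣ n) :
    ∀ j : ℕ, 2 * j ≤ n →
      (∏ i ∈ Finset.range j, ((n : ℤ) - 2 * i - 1)) * lamk n (2 * j)
        = (-1) ^ j * (∏ i ∈ Finset.range j, (2 * (i : ℤ) + 1)) * lamk n 0 := by
  intro j
  induction j with
  | zero => simp
  | succ j ih =>
    intro hj
    have hj' : 2 * j ≤ n := by omega
    have hrec := lamk_rec hev (k := 2 * j + 1) (by omega) (by omega) ⟨j, by ring⟩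
    have h1 : 2 * j + 1 + 1 = 2 * (j + 1) := by ring
    have h2 : 2 * j + 1 - 1 = 2 * j := by omega
    rw [h1, h2] at hrec
    have ihh := ih hj'
    rw [Finset.prod_range_succ, Finset.prod_range_succ]
    have hcast : ((n : ℤ) - (2 * j + 1 : ℕ)) = (n : ℤ) - 2 * j - 1 := by push_cast; ring
    rw [hcast] at hrec
    have expand : (∏ i ∈ Finset.range j, ((n : ℤ) - 2 * i - 1)) * ((n:ℤ) - 2*j - 1)
        * lamk n (2 * (j+1))
        = (∏ i ∈ Finset.range j, ((n : ℤ) - 2 * i - 1)) * (((n:ℤ) - 2*j - 1)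
        * lamk n (2 * (j+1))) := by ring
    rw [expand, hrec]
    have : (-(2 * j + 1 : ℕ) : ℤ) = -(2 * (j:ℤ) + 1) := by push_cast; ring
    rw [this]
    calc (∏ i ∈ Finset.range j, ((n : ℤ) - 2 * i - 1)) * (-(2 * (j:ℤ) + 1) * lamk n (2 * j))
        = -(2 * (j:ℤ) + 1) * ((∏ i ∈ Finset.range j, ((n : ℤ) - 2 * i - 1)) * lamk n (2 * j)) := by
          ring
      _ = -(2 * (j:ℤ) + 1) * ((-1) ^ j * (∏ i ∈ Finset.range j, (2 * (i : ℤ) + 1)) * lamk n 0) := by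
          rw [ihh]
      _ = (-1) ^ (j+1) * ((∏ i ∈ Finset.range j, (2 * (i : ℤ) + 1)) * (2 * (j:ℤ) + 1)) *
          lamk n 0 := by ring

end KFUN
section INEQ
open Finset
variable {n : ℕ}

lemma lamk_zero_pos (n : ℕ) : 0 < lamk n 0 := by
  rw [lamk_zero]
  exact_mod_cast Nat.choose_pos (Nat.div_le_self n 2)

lemma lamk_two (hn : 4 ∣ n) (hpos : 0 < n) :
    ((n : ℤ) - 1) * lamk n 2 = -(lamk n 0) := by
  have h4 : 4 ≤ n := Nat.le_of_dvd hpos hn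
  have hev : 2 ∣ n := dvd_trans ⟨2, rfl⟩ hn
  have := lamk_identity hev 1 (by omega)
  simpa using this

lemma lamk_two_neg (hn : 4 ∣ n) (hpos : 0 < n) : lamk n 2 < 0 := by
  have h4 : 4 ≤ n := Nat.le_of_dvd hpos hn
  have h2 := lamk_two hn hpos
  have h0 := lamk_zero_pos n
  nlinarith [h2, h0]

lemma prod_ineq (hn : 4 ∣ n) {j : ℕ} (hjodd : Odd j) (hj : 2 * j ≤ n) :
    ((n : ℤ) - 1) * (∏ i ∈ Finset.range j, (2 * (i : ℤ) + 1))
      ≤ ∏ i ∈ Finset.range j, ((n : ℤ) - 2 * i - 1) := by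
  have hj1 : 1 ≤ j := hjodd.pos
  obtain ⟨m', rfl⟩ : ∃ m', j = m' + 1 := ⟨j - 1, by omega⟩
  have hj2 : 2 * (m' + 1) + 2 ≤ n := by
    obtain ⟨q, rfl⟩ := hn
    obtain ⟨t, ht⟩ := hjodd
    omega
  have hL : (∏ i ∈ Finset.range (m'+1), (2 * (i : ℤ) + 1))
      = ∏ i ∈ Finset.range m', (2 * ((i:ℤ) + 1) + 1) := by
    rw [Finset.prod_range_succ' (fun i => 2 * (i : ℤ) + 1),
      Finset.prod_congr rfl (fun (x : ℕ) _ => (by push_cast; ring :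
        (2 * (((x+1 : ℕ)) : ℤ) + 1) = 2 * ((x:ℤ) + 1) + 1))]
    norm_num
  have hR : (∏ i ∈ Finset.range (m'+1), ((n : ℤ) - 2 * i - 1))
      = (∏ i ∈ Finset.range m', ((n:ℤ) - 2 * ((i:ℤ) + 1) - 1)) * ((n:ℤ) - 1) := by
    rw [Finset.prod_range_succ' (fun i => (n : ℤ) - 2 * i - 1),
      Finset.prod_congr rfl (fun (x : ℕ) _ => (by push_cast; ring :
        ((n : ℤ) - 2 * (((x+1 : ℕ)) : ℤ) - 1) = (n:ℤ) - 2 * ((x:ℤ) + 1) - 1))]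
    norm_num
  rw [hL, hR, mul_comm ((n:ℤ) - 1) _]
  apply mul_le_mul_of_nonneg_right ?_ (by
    have : (4:ℤ) ≤ n := by exact_mod_cast Nat.le_of_dvd (by omega) hn
    linarith)
  rw [← Finset.prod_range_reflect (fun i => (n : ℤ) - 2 * ((i:ℤ) + 1) - 1) m']
  apply Finset.prod_le_prod
  · intro i _; positivity
  · intro i hi
    rw [Finset.mem_range] at hi
    have hc : ((m' - 1 - i : ℕ) : ℤ) = (m' : ℤ) - 1 - i := by omega
    simp only [hc]
    push_cast
    omega

theorem lamk_ge (hn : 4 ∣ n) (hpos : 0 < n) {k : ℕ} (hk : k ≤ n) :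
    lamk n 2 ≤ lamk n k := by
  have h4 : 4 ≤ n := Nat.le_of_dvd hpos hn
  have hev : 2 ∣ n := dvd_trans ⟨2, rfl⟩ hn
  have h0 := lamk_zero_pos n
  have h2 := lamk_two hn hpos
  have h2neg := lamk_two_neg hn hpos
  rcases Nat.even_or_odd k with hke | hko
  · obtain ⟨j0, hj0⟩ := hke
    obtain ⟨j, rfl⟩ : ∃ j, k = 2 * j := ⟨j0, by omega⟩
    have hid := lamk_identity hev j (by omega)
    have hBpos : 0 < ∏ i ∈ Finset.range j, ((n : ℤ) - 2 * i - 1) := by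
      apply Finset.prod_pos
      intro i hi
      rw [Finset.mem_range] at hi
      omega
    have hApos : 0 < ∏ i ∈ Finset.range j, (2 * (i : ℤ) + 1) := by
      apply Finset.prod_pos; intro i _; positivity
    rcases Nat.even_or_odd j with hje | hjo
    · -- lamk n (2j) ≥ 0 > lamk n 2
      have hsgn : ((-1 : ℤ)) ^ j = 1 := hje.neg_one_pow
      rw [hsgn, one_mul] at hid
      have : 0 ≤ lamk n (2 * j) := by
        by_contra hneg
        push_neg at hneg
        nlinarith
      linarith
    · have hsgn : ((-1 : ℤ)) ^ j = -1 := hjo.neg_one_pow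
      rw [hsgn] at hid
      -- hid : B * lamk (2j) = -(A) * lamk 0
      have hprod := prod_ineq hn hjo (by omega)
      -- goal: lamk 2 ≤ lamk (2j);  multiply by (n-1)*B > 0
      have hn1pos : (0:ℤ) < (n:ℤ) - 1 := by
        have : (4:ℤ) ≤ n := by exact_mod_cast h4
        linarith
      have hkey : (((n:ℤ) - 1) * (∏ i ∈ Finset.range j, ((n : ℤ) - 2 * i - 1))) * lamk n 2
          ≤ (((n:ℤ) - 1) * (∏ i ∈ Finset.range j, ((n : ℤ) - 2 * i - 1))) * lamk n (2*j) := by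
        have hL : (((n:ℤ) - 1) * (∏ i ∈ Finset.range j, ((n : ℤ) - 2 * i - 1))) * lamk n (2*j)
            = -(((n:ℤ) - 1) * (∏ i ∈ Finset.range j, (2 * (i : ℤ) + 1))) * lamk n 0 := by
          have e : (((n:ℤ) - 1) * (∏ i ∈ Finset.range j, ((n : ℤ) - 2 * i - 1))) * lamk n (2*j)
              = ((n:ℤ) - 1) * ((∏ i ∈ Finset.range j, ((n : ℤ) - 2 * i - 1)) * lamk n (2*j)) := by
            ring
          rw [e, hid]; ring
        have hR : (((n:ℤ) - 1) * (∏ i ∈ Finset.range j, ((n : ℤ) - 2 * i - 1))) * lamk n 2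
            = -(∏ i ∈ Finset.range j, ((n : ℤ) - 2 * i - 1)) * lamk n 0 := by
          have e : (((n:ℤ) - 1) * (∏ i ∈ Finset.range j, ((n : ℤ) - 2 * i - 1))) * lamk n 2
              = (∏ i ∈ Finset.range j, ((n : ℤ) - 2 * i - 1)) * (((n:ℤ) - 1) * lamk n 2) := by
            ring
          rw [e, h2]; ring
        rw [hL, hR]
        have hineq := prod_ineq hn hjo (by omega)
        have := mul_le_mul_of_nonneg_right hineq (le_of_lt h0)
        linarith
      exact le_of_mul_le_mul_left hkey (mul_pos hn1pos hBpos)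
  · rw [lamk_odd hev hk hko]
    linarith

end INEQ
section SPEC
open Finset Matrix Module.End

variable {n : ℕ}

def chi (n : ℕ) (S : Finset (Fin n)) : (Fin n → ℤˣ) → ℝ :=
  fun x => ∏ i ∈ S, ((x i : ℤ) : ℝ)

lemma chi_mul (S : Finset (Fin n)) (x y : Fin n → ℤˣ) :
    chi n S (x * y) = chi n S x * chi n S y := by
  unfold chi
  rw [← Finset.prod_mul_distrib]
  exact Finset.prod_congr rfl fun i _ => by simp

lemma sum_units_int (ε : Fin n → ℤˣ) :
    ∑ i, ((ε i : ℤ)) = (n : ℤ) - 2 * (Finset.univ.filter (fun i => ε i = -1)).card := by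
  have h : ∀ i, ((ε i : ℤ)) = 1 - 2 * (if ε i = -1 then (1:ℤ) else 0) := by
    intro i
    rcases Int.units_eq_one_or (ε i) with h | h <;> simp [h]
  rw [Finset.sum_congr rfl (fun i _ => h i), Finset.sum_sub_distrib, ← Finset.mul_sum,
    Finset.sum_boole, Finset.sum_const, Finset.card_univ, Fintype.card_fin]
  push_cast
  ring

lemma sum_chi (hev : 2 ∣ n) (S : Finset (Fin n)) :
    ∑ ε : Fin n → ℤˣ, (if (∑ i, ((ε i : ℤ))) = 0 then chi n S ε else 0)
      = (Lam n S : ℝ) := by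
  rw [← Finset.sum_filter]
  unfold Lam
  push_cast
  refine Finset.sum_nbij' (fun ε => Finset.univ.filter (fun i => ε i = -1))
    (fun T => fun i => if i ∈ T then -1 else 1) ?_ ?_ ?_ ?_ ?_ <;> beta_reduce
  · intro ε hε
    rw [Finset.mem_filter] at hε
    rw [Finset.mem_powersetCard_univ]
    have hsum := sum_units_int ε
    rw [hε.2] at hsum
    omega
  · intro T hT
    rw [Finset.mem_powersetCard_univ] at hT
    rw [Finset.mem_filter]
    refine ⟨Finset.mem_univ _, ?_⟩
    have hsum := sum_units_int (fun i => if i ∈ T then -1 else 1)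
    have hfe : (Finset.univ.filter
        (fun i => (if i ∈ T then (-1:ℤˣ) else 1) = -1)) = T := by
      ext i
      simp only [Finset.mem_filter, Finset.mem_univ, true_and]
      by_cases h : i ∈ T <;> simp [h]
    rw [hfe, hT] at hsum
    rw [hsum]
    omega
  · intro ε hε
    funext i
    by_cases h : ε i = -1
    · simp [h]
    · have h1 : ε i = 1 := by rcases Int.units_eq_one_or (ε i) with h' | h' <;> tauto
      simp [h, h1]
  · intro T hT
    ext i
    simp only [Finset.mem_filter, Finset.mem_univ, true_and]
    by_cases h : i ∈ T <;> simp [h]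
  · intro ε hε
    unfold chi
    have h : ∀ i ∈ S, ((ε i : ℤ) : ℝ) = if ε i = -1 then (-1 : ℝ) else 1 := by
      intro i _
      rcases Int.units_eq_one_or (ε i) with h | h <;> simp [h]
    rw [Finset.prod_congr rfl h, Finset.prod_ite, Finset.prod_const, Finset.prod_const,
      one_pow, mul_one]
    congr 1
    rw [Finset.inter_comm, ← Finset.filter_mem_eq_inter]
    congr 1
    ext i
    simp only [Finset.mem_filter, Finset.mem_univ, true_and]
    tauto

end SPEC
section SPEC2
open Finset Matrix Module.End

variable {n : ℕ}

lemma adj_mul_iff (hpos : 0 < n) (x ε : Fin n → ℤˣ) :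
    (Omega n).Adj x (x * ε) ↔ (∑ i, ((ε i : ℤ))) = 0 := by
  have hterm : ∀ i, ((x i : ℤ) * (((x * ε) i : ℤˣ) : ℤ)) = (ε i : ℤ) := by
    intro i
    have : ((x * ε) i) = x i * ε i := rfl
    rw [this]
    rcases Int.units_eq_one_or (x i) with h | h <;> simp [h]
  constructor
  · intro ⟨_, h2⟩
    rw [← Finset.sum_congr rfl (fun i _ => hterm i)]
    exact h2
  · intro h
    refine ⟨?_, by rw [Finset.sum_congr rfl (fun i _ => hterm i)]; exact h⟩
    intro hc
    have hε : ε = 1 := mul_left_cancel (a := x)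
      (show x * ε = x * 1 by rw [mul_one]; exact hc.symm)
    rw [hε] at h
    simp at h
    omega

lemma mulVec_chi (hev : 2 ∣ n) (hpos : 0 < n) (S : Finset (Fin n)) :
    ((Omega n).adjMatrix ℝ).mulVec (chi n S) = ((Lam n S : ℝ)) • chi n S := by
  funext x
  rw [SimpleGraph.adjMatrix_mulVec_apply]
  rw [SimpleGraph.neighborFinset_eq_filter, Finset.sum_filter]
  have hre : ∑ u : Fin n → ℤˣ, (if (Omega n).Adj x u then chi n S u else 0)
      = ∑ ε : Fin n → ℤˣ, (if (Omega n).Adj x (x * ε) then chi n S (x * ε) else 0) :=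
    (Fintype.sum_equiv (Equiv.mulLeft x)
      (fun ε => if (Omega n).Adj x (x * ε) then chi n S (x * ε) else 0)
      (fun u => if (Omega n).Adj x u then chi n S u else 0)
      (fun ε => rfl)).symm
  rw [hre]
  have hterm : ∀ ε : Fin n → ℤˣ, (if (Omega n).Adj x (x * ε) then chi n S (x * ε) else 0)
      = chi n S x * (if (∑ i, ((ε i : ℤ))) = 0 then chi n S ε else 0) := by
    intro ε
    by_cases h : (∑ i, ((ε i : ℤ))) = 0
    · rw [if_pos h, if_pos ((adj_mul_iff hpos x ε).2 h), chi_mul]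
    · rw [if_neg h, if_neg (fun hc => h ((adj_mul_iff hpos x ε).1 hc)), mul_zero]
  rw [Finset.sum_congr rfl (fun ε _ => hterm ε), ← Finset.mul_sum, sum_chi hev]
  simp [mul_comm]

end SPEC2

section SPEC3
open Finset Matrix Module.End Module

variable {n : ℕ}

def chiHom (n : ℕ) (S : Finset (Fin n)) : (Fin n → ℤˣ) →* ℝ where
  toFun := chi n S
  map_one' := by unfold chi; simp
  map_mul' := chi_mul S

lemma chi_apply_delta (S : Finset (Fin n)) (i : Fin n) :
    chi n S (fun j => if j = i then -1 else 1) = if i ∈ S then (-1 : ℝ) else 1 := by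
  unfold chi
  have h : ∀ j ∈ S, ((((if j = i then (-1 : ℤˣ) else 1) : ℤˣ) : ℤ) : ℝ)
      = if j = i then (-1 : ℝ) else 1 := by
    intro j _; by_cases hj : j = i <;> simp [hj]
  rw [Finset.prod_congr rfl h, Finset.prod_ite_eq' S i (fun _ => (-1 : ℝ))]

lemma chiHom_inj : Function.Injective (chiHom n) := by
  intro S S' h
  ext i
  have hS : chi n S (fun j => if j = i then -1 else 1) =
      chi n S' (fun j => if j = i then -1 else 1) :=
    DFunLike.congr_fun h (fun j => if j = i then -1 else 1)
  rw [chi_apply_delta, chi_apply_delta] at hS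
  by_cases h1 : i ∈ S <;> by_cases h2 : i ∈ S' <;> simp [h1, h2] at hS ⊢ <;> norm_num at hS

lemma chi_li : LinearIndependent ℝ (fun S : Finset (Fin n) => chi n S) :=
  (linearIndependent_monoidHom (Fin n → ℤˣ) ℝ).comp (chiHom n) chiHom_inj

lemma card_eq_finrank_chi :
    Fintype.card (Finset (Fin n)) = Module.finrank ℝ ((Fin n → ℤˣ) → ℝ) := by
  rw [Fintype.card_finset, Fintype.card_fin, Module.finrank_pi,
    Fintype.card_fun, Fintype.card_units_int, Fintype.card_fin]

noncomputable def chiBasis (n : ℕ) : Basis (Finset (Fin n)) ℝ ((Fin n → ℤˣ) → ℝ) :=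
  basisOfLinearIndependentOfCardEqFinrank chi_li card_eq_finrank_chi

lemma spectrum_omega (hn : 4 ∣ n) (hpos : 0 < n) :
    spectrum ℝ ((Omega n).adjMatrix ℝ)
      = Set.range (fun S : Finset (Fin n) => ((Lam n S : ℤ) : ℝ)) := by
  have hev : 2 ∣ n := dvd_trans ⟨2, rfl⟩ hn
  have hdiag : Matrix.toLin' ((Omega n).adjMatrix ℝ)
      = Matrix.toLin (chiBasis n) (chiBasis n)
          (Matrix.diagonal fun S : Finset (Fin n) => ((Lam n S : ℤ) : ℝ)) := by
    apply (chiBasis n).ext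
    intro S
    rw [(hasEigenvector_toLin_diagonal (fun S : Finset (Fin n) => ((Lam n S : ℤ) : ℝ)) S
      (chiBasis n)).apply_eq_smul]
    rw [Matrix.toLin'_apply]
    have hb : (chiBasis n) S = chi n S :=
      congrFun (coe_basisOfLinearIndependentOfCardEqFinrank chi_li card_eq_finrank_chi) S
    rw [hb]
    exact mulVec_chi hev hpos S
  ext μ
  rw [← AlgEquiv.spectrum_eq (Matrix.toLinAlgEquiv' (R := ℝ) (n := Fin n → ℤˣ))
      ((Omega n).adjMatrix ℝ), ← Module.End.hasEigenvalue_iff_mem_spectrum]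
  have heq : (Matrix.toLinAlgEquiv' (R := ℝ)) ((Omega n).adjMatrix ℝ)
      = Matrix.toLin' ((Omega n).adjMatrix ℝ) := by
    apply LinearMap.ext
    intro v
    rw [Matrix.toLinAlgEquiv'_apply, Matrix.toLin'_apply]
  rw [heq, hdiag, hasEigenvalue_toLin_diagonal_iff _ (chiBasis n)]
  simp [eq_comm]

end SPEC3

/-- For n a positive multiple of 4, the least eigenvalue of the adjacency matrix of
Ω_n is −(1/(n−1))·C(n, n/2). -/
theorem omega_least_eigenvalue (n : ℕ) (hn : 4 ∣ n) (hpos : 0 < n) :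
    IsLeast (spectrum ℝ ((Omega n).adjMatrix ℝ))
      (-(1 / ((n : ℝ) - 1)) * (n.choose (n / 2) : ℝ)) := by
  have hev : 2 ∣ n := dvd_trans ⟨2, rfl⟩ hn
  have h4 : 4 ≤ n := Nat.le_of_dvd hpos hn
  have hspec := spectrum_omega hn hpos
  have hne : ((n : ℝ) - 1) ≠ 0 := by
    have : (4 : ℝ) ≤ n := by exact_mod_cast h4
    linarith
  have hval : (-(1 / ((n : ℝ) - 1)) * (n.choose (n / 2) : ℝ)) = ((lamk n 2 : ℤ) : ℝ) := by
    have h2 := lamk_two hn hpos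
    have h0 := lamk_zero n
    have hcast : ((n : ℝ) - 1) * ((lamk n 2 : ℤ) : ℝ) = -((n.choose (n / 2) : ℝ)) := by
      have := congrArg (fun z : ℤ => (z : ℝ)) h2
      push_cast at this
      rw [h0] at this
      push_cast at this
      linarith
    field_simp
    linarith
  constructor
  · rw [hspec, hval]
    refine ⟨({⟨0, by omega⟩, ⟨1, by omega⟩} : Finset (Fin n)), ?_⟩
    have hcard : ({⟨0, by omega⟩, ⟨1, by omega⟩} : Finset (Fin n)).card = 2 := by
      rw [Finset.card_insert_of_notMem (by simp [Fin.ext_iff]), Finset.card_singleton]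
    beta_reduce
    rw [lam_eq_lamk, hcard]
  · intro mu hmu
    rw [hspec] at hmu
    obtain ⟨S, rfl⟩ := hmu
    rw [hval]
    have hge := lamk_ge hn hpos (card_le_n S)
    beta_reduce
    rw [lam_eq_lamk]
    exact_mod_cast hge
end

section
/- For n a multiple of 4, every independent set in Ω_n has size at most 2^n/n. -/
open Polynomial Finset

namespace OmegaAux

variable {n : ℕ}

/-- character indexed by a finset -/
def chi (u : Finset (Fin n)) (z : Fin n → ℤˣ) : ℤ := ∏ i ∈ u, (z i : ℤ)

/-- number of -1 coordinates -/
def wt (z : Fin n → ℤˣ) : ℕ := (univ.filter fun i => z i = -1).card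

lemma chi_mul (u : Finset (Fin n)) (x y : Fin n → ℤˣ) :
    chi u (x * y) = chi u x * chi u y := by
  simp [chi, Finset.prod_mul_distrib]

lemma mul_eq_one_iff (x y : Fin n → ℤˣ) : x * y = 1 ↔ x = y := by
  constructor
  · intro h
    funext i
    have := congrFun h i
    simp only [Pi.mul_apply, Pi.one_apply] at this
    have h2 : x i * (x i * y i) = x i * 1 := by rw [this]
    rwa [← mul_assoc, Int.units_mul_self, one_mul, mul_one, eq_comm] at h2
  · rintro rfl
    funext i
    simp [Int.units_mul_self]

lemma sum_chi (v : Fin n → ℤˣ) :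
    ∑ u : Finset (Fin n), chi u v = if v = 1 then 2 ^ n else 0 := by
  have h := Fintype.prod_add (fun i => (v i : ℤ)) (fun _ => (1 : ℤ))
  simp only [Finset.prod_const_one, mul_one] at h
  have h2 : ∑ u : Finset (Fin n), chi u v = ∏ a, ((v a : ℤ) + 1) := by
    rw [h]; rfl
  rw [h2]
  by_cases hv : v = 1
  · subst hv
    rw [if_pos rfl]
    simp [Finset.prod_const]
  · rw [if_neg hv]
    obtain ⟨i, hi⟩ : ∃ i, v i ≠ 1 := by
      by_contra hc; push_neg at hc; exact hv (funext hc)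
    have hvi : (v i : ℤ) = -1 := by
      rcases Int.units_eq_one_or (v i) with h1 | h1
      · exact absurd h1 hi
      · rw [h1]; rfl
    refine Finset.prod_eq_zero (Finset.mem_univ i) ?_
    rw [hvi]; ring

lemma sum_chi_mul (x y : Fin n → ℤˣ) :
    ∑ u : Finset (Fin n), chi u x * chi u y = if x = y then 2 ^ n else 0 := by
  have h := sum_chi (x * y)
  rw [if_congr (mul_eq_one_iff x y) rfl rfl] at h
  rw [← h]
  simp [chi_mul]

lemma dot_eq (v : Fin n → ℤˣ) : ∑ i, (v i : ℤ) = (n : ℤ) - 2 * wt v := by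
  classical
  have hcard : (univ.filter fun i => v i = -1).card
      + (univ.filter fun i => ¬ v i = -1).card = n := by
    rw [Finset.card_filter_add_card_filter_not]; simp
  rw [← Finset.sum_filter_add_sum_filter_not univ (fun i => v i = -1)]
  have e1 : ∑ i ∈ univ.filter (fun i => v i = -1), (v i : ℤ)
      = -(wt v : ℤ) := by
    rw [Finset.sum_congr rfl (g := fun _ => (-1 : ℤ)) (fun i hi => by
      rw [(Finset.mem_filter.mp hi).2]; rfl)]
    simp [wt]
  have e2 : ∑ i ∈ univ.filter (fun i => ¬ v i = -1), (v i : ℤ)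
      = ((n : ℤ) - wt v) := by
    rw [Finset.sum_congr rfl (g := fun _ => (1 : ℤ)) (fun i hi => by
      rcases Int.units_eq_one_or (v i) with h1 | h1
      · rw [h1]; rfl
      · exact absurd h1 (Finset.mem_filter.mp hi).2)]
    rw [Finset.sum_const]
    have : (univ.filter fun i => ¬ v i = -1).card = n - wt v := by
      unfold wt; omega
    rw [this, nsmul_eq_mul, mul_one]
    have hle : wt v ≤ n := by unfold wt; omega
    exact Nat.cast_sub hle
  rw [e1, e2]
  ring

/-- sum over ℤˣ -/
lemma sum_units {M : Type*} [AddCommMonoid M] (f : ℤˣ → M) :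
    ∑ ε : ℤˣ, f ε = f 1 + f (-1) := by
  have huniv : ({1, -1} : Finset ℤˣ) = univ := by
    apply Finset.eq_univ_iff_forall.mpr
    intro u
    rcases Int.units_eq_one_or u with rfl | rfl <;> simp
  rw [← huniv, Finset.sum_pair (by decide : (1 : ℤˣ) ≠ -1)]

lemma prod_ite_card (p : Fin n → Prop) [DecidablePred p] (a b : ℤ[X]) :
    ∏ i, (if p i then a else b) = a ^ (univ.filter p).card * b ^ (n - (univ.filter p).card) := by
  rw [Finset.prod_ite (fun _ => a) (fun _ => b), Finset.prod_const, Finset.prod_const]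
  congr 2
  have := Finset.card_filter_add_card_filter_not (s := (univ : Finset (Fin n))) (p := p)
  simp only [Finset.card_univ, Fintype.card_fin] at this
  omega

/-- F1 -/
lemma sum_z (A : Finset (Fin n)) :
    ∑ z : Fin n → ℤˣ, (C (chi A z) * X ^ (wt z) : ℤ[X])
      = (1 - X) ^ A.card * (1 + X) ^ (n - A.card) := by
  classical
  have hpt : ∀ z : Fin n → ℤˣ, (C (chi A z) * X ^ (wt z) : ℤ[X])
      = ∏ i, ((if i ∈ A then C ((z i : ℤ)) else 1) * (if z i = -1 then X else 1)) := by
    intro z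
    rw [Finset.prod_mul_distrib]
    congr 1
    · rw [chi, map_prod]
      rw [Finset.prod_ite_mem univ A (fun i => C ((z i : ℤ)) : Fin n → ℤ[X]),
        Finset.univ_inter]
    · rw [prod_ite_card (fun i => z i = -1) X 1, one_pow, mul_one]
      rfl
  simp_rw [hpt]
  rw [← Fintype.prod_sum (fun i (ε : ℤˣ) =>
    (if i ∈ A then C ((ε : ℤ)) else 1) * (if ε = -1 then X else 1))]
  have hfac : ∀ i, (∑ ε : ℤˣ, (if i ∈ A then C ((ε : ℤ)) else 1) * (if ε = -1 then X else 1))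
      = if i ∈ A then 1 - X else 1 + X := by
    intro i
    rw [sum_units]
    by_cases hi : i ∈ A
    · simp only [if_pos hi]
      norm_num
      ring
    · simp only [if_neg hi]
      norm_num
  rw [Finset.prod_congr rfl fun i _ => hfac i]
  rw [prod_ite_card (fun i => i ∈ A) (1 - X) (1 + X)]
  congr 2 <;> rw [Finset.filter_mem_eq_inter, Finset.univ_inter]

/-- F2 -/
lemma sum_u (z : Fin n → ℤˣ) :
    ∑ u : Finset (Fin n), (C (chi u z) * X ^ u.card : ℤ[X])
      = (1 - X) ^ (wt z) * (1 + X) ^ (n - wt z) := by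
  classical
  have h := Fintype.prod_add (fun i => (C ((z i : ℤ)) * X : ℤ[X])) (fun _ => (1 : ℤ[X]))
  simp only [Finset.prod_const_one, mul_one] at h
  have h2 : ∀ t : Finset (Fin n), (∏ a ∈ t, (C ((z a : ℤ)) * X : ℤ[X]))
      = C (chi t z) * X ^ t.card := by
    intro t
    rw [Finset.prod_mul_distrib, Finset.prod_const, chi, map_prod]
  simp_rw [h2] at h
  rw [← h]
  have hfac : ∀ i, (C ((z i : ℤ)) * X + 1 : ℤ[X]) = if z i = -1 then 1 - X else 1 + X := by
    intro i
    by_cases hi : z i = -1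
    · rw [if_pos hi, hi]
      simp only [Units.val_neg, Units.val_one, map_neg, map_one]
      ring
    · have : z i = 1 := (Int.units_eq_one_or (z i)).resolve_right hi
      rw [if_neg hi, this]
      simp only [Units.val_one, map_one]
      ring
  rw [Finset.prod_congr rfl fun i _ => hfac i]
  exact prod_ite_card (fun i => z i = -1) (1 - X) (1 + X)

/-- generic coefficient extraction -/
lemma coeff_extract {ι : Type*} [DecidableEq ι] (s : Finset ι) (c : ι → ℤ) (e : ι → ℕ) (k : ℕ) :
    (∑ i ∈ s, (C (c i) * X ^ (e i) : ℤ[X])).coeff k = ∑ i ∈ s.filter (fun i => e i = k), c i := by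
  rw [finset_sum_coeff, Finset.sum_filter]
  refine Finset.sum_congr rfl fun i _ => ?_
  rw [coeff_C_mul, coeff_X_pow]
  by_cases h : e i = k
  · subst h; simp
  · rw [if_neg fun hh => h hh.symm, mul_zero, if_neg h]

noncomputable def lam (n k : ℕ) : ℤ := (((1 - X) ^ k * (1 + X) ^ (n - k) : ℤ[X])).coeff (n / 2)

noncomputable def kap (m k : ℕ) : ℤ := (((1 - X ^ 2 : ℤ[X])) ^ m).coeff k

lemma lamSum_eq (u : Finset (Fin n)) :
    ∑ z ∈ univ.filter (fun z : Fin n → ℤˣ => wt z = n / 2), chi u z = lam n u.card := by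
  have h := congrArg (fun p : ℤ[X] => p.coeff (n / 2)) (sum_z u)
  rw [coeff_extract] at h
  simpa [lam] using h

lemma card_wt_filter :
    ((univ.filter fun z : Fin n → ℤˣ => wt z = n / 2)).card = n.choose (n / 2) := by
  have h := lamSum_eq (n := n) ∅
  simp only [chi, Finset.prod_empty, Finset.sum_const, nsmul_eq_mul, mul_one,
    Finset.card_empty, lam, pow_zero, one_mul] at h
  rw [coeff_one_add_X_pow] at h
  · exact_mod_cast h

lemma kapSum_eq (hn : 2 ∣ n) (z : Fin n → ℤˣ) (hz : wt z = n / 2) (k : ℕ) :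
    ∑ u ∈ univ.filter (fun u : Finset (Fin n) => u.card = k), chi u z = kap (n / 2) k := by
  have h := congrArg (fun p : ℤ[X] => p.coeff k) (sum_u z)
  rw [coeff_extract] at h
  rw [h, hz]
  have hn2' : n - n / 2 = n / 2 := by omega
  rw [hn2', kap]
  congr 2
  rw [← mul_pow]
  ring

lemma card_card_filter (k : ℕ) :
    ((univ.filter fun u : Finset (Fin n) => u.card = k)).card = n.choose k := by
  have : (univ.filter fun u : Finset (Fin n) => u.card = k)
      = (univ : Finset (Fin n)).powersetCard k := by
    rw [Finset.powersetCard_eq_filter, Finset.powerset_univ]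
  rw [this, Finset.card_powersetCard, Finset.card_univ, Fintype.card_fin]

lemma reciprocity (hn : 2 ∣ n) (k : ℕ) :
    (n.choose k : ℤ) * lam n k = (n.choose (n / 2) : ℤ) * kap (n / 2) k := by
  classical
  have hswap := Finset.sum_comm (s := univ.filter fun u : Finset (Fin n) => u.card = k)
    (t := univ.filter fun z : Fin n → ℤˣ => wt z = n / 2) (f := fun u z => chi u z)
  have h1 : ∑ u ∈ (univ.filter fun u : Finset (Fin n) => u.card = k),
      ∑ z ∈ (univ.filter fun z : Fin n → ℤˣ => wt z = n / 2), chi u z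
      = (n.choose k : ℤ) * lam n k := by
    rw [Finset.sum_congr rfl (g := fun _ => lam n k) (fun u hu => by
      rw [lamSum_eq u, (Finset.mem_filter.mp hu).2])]
    rw [Finset.sum_const, card_card_filter, nsmul_eq_mul]
  have h2 : ∑ z ∈ (univ.filter fun z : Fin n → ℤˣ => wt z = n / 2),
      ∑ u ∈ (univ.filter fun u : Finset (Fin n) => u.card = k), chi u z
      = (n.choose (n / 2) : ℤ) * kap (n / 2) k := by
    rw [Finset.sum_congr rfl (g := fun _ => kap (n / 2) k) (fun z hz => by
      rw [kapSum_eq hn z (Finset.mem_filter.mp hz).2 k])]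
    rw [Finset.sum_const, card_wt_filter, nsmul_eq_mul]
  rw [← h1, hswap, h2]

lemma one_sub_sq_pow (m : ℕ) : ((1 - X ^ 2 : ℤ[X])) ^ m
    = ∑ j ∈ Finset.range (m + 1), C ((-1 : ℤ) ^ j * (m.choose j : ℤ)) * X ^ (2 * j) := by
  rw [sub_eq_neg_add, add_pow]
  refine Finset.sum_congr rfl fun j hj => ?_
  rw [one_pow, mul_one, map_mul, map_pow, map_neg, map_one, map_natCast]
  rw [neg_pow, pow_mul]
  ring

lemma kap_eq (m k : ℕ) : kap m k
    = ∑ j ∈ (Finset.range (m + 1)).filter (fun j => 2 * j = k), (-1 : ℤ) ^ j * (m.choose j : ℤ) := by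
  rw [kap, one_sub_sq_pow, coeff_extract]

lemma kap_odd (m k : ℕ) (hk : k % 2 = 1) : kap m k = 0 := by
  rw [kap_eq]
  have : (Finset.range (m + 1)).filter (fun j => 2 * j = k) = ∅ := by
    apply Finset.filter_false_of_mem
    intro j _
    omega
  rw [this, Finset.sum_empty]

lemma kap_even (m j : ℕ) : kap m (2 * j) = (-1) ^ j * m.choose j := by
  rw [kap_eq]
  by_cases hj : j ≤ m
  · have : (Finset.range (m + 1)).filter (fun i => 2 * i = 2 * j) = {j} := by
      ext i
      simp only [Finset.mem_filter, Finset.mem_range, Finset.mem_singleton]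
      omega
    rw [this, Finset.sum_singleton]
  · have : (Finset.range (m + 1)).filter (fun i => 2 * i = 2 * j) = ∅ := by
      apply Finset.filter_false_of_mem
      intro i hi
      simp only [Finset.mem_range] at hi
      omega
    rw [this, Finset.sum_empty, Nat.choose_eq_zero_of_lt (by omega), Nat.cast_zero, mul_zero]

/-- the binomial inequality -/
lemma binom_step (m j : ℕ) (h : 2 * (j + 1) ≤ m) :
    m.choose (j + 1) * (2 * m).choose (2 * j) ≤ m.choose j * (2 * m).choose (2 * (j + 1)) := by
  have hjm : j ≤ m := by omega
  have hj2 : 2 * j ≤ 2 * m := by omega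
  have hj3 : 2 * j + 1 ≤ 2 * m := by omega
  have I1 := Nat.choose_succ_right_eq m j
  have I2 := Nat.choose_succ_right_eq (2 * m) (2 * j)
  have I3 := Nat.choose_succ_right_eq (2 * m) (2 * j + 1)
  zify [hjm, hj2, hj3] at I1 I2 I3 ⊢
  set A := (m.choose j : ℤ)
  set B := (m.choose (j + 1) : ℤ)
  set P := ((2 * m).choose (2 * j) : ℤ)
  set Q := ((2 * m).choose (2 * j + 1) : ℤ)
  set R := ((2 * m).choose (2 * j + 1 + 1) : ℤ)
  have h2j2 : 2 * (j + 1) = 2 * j + 1 + 1 := by ring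
  rw [h2j2]
  have hA : (0 : ℤ) ≤ A := Int.natCast_nonneg _
  have hP : (0 : ℤ) ≤ P := Int.natCast_nonneg _
  have hc1 : (0 : ℤ) < ((j : ℤ) + 1) * (2 * j + 1) * (2 * j + 2) := by positivity
  apply le_of_mul_le_mul_right ?_ hc1
  calc B * P * (((j : ℤ) + 1) * (2 * j + 1) * (2 * j + 2))
      = (A * P * ((2 * (m : ℤ) - 2 * j) * ((j : ℤ) + 1))) * (2 * j + 1) := by
        linear_combination (P * (2 * (j : ℤ) + 1) * (2 * j + 2)) * I1
    _ ≤ (A * P * ((2 * (m : ℤ) - 2 * j) * ((j : ℤ) + 1))) * (2 * m - (2 * j + 1)) := by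
        apply mul_le_mul_of_nonneg_left (by omega)
        have h0 : (0 : ℤ) ≤ 2 * (m : ℤ) - 2 * j := by omega
        positivity
    _ = A * R * (((j : ℤ) + 1) * (2 * j + 1) * (2 * j + 2)) := by
        linear_combination (-A * ((j : ℤ) + 1) * (2 * (m : ℤ) - 2 * j - 1)) * I2
          + (-A * ((j : ℤ) + 1) * (2 * (j : ℤ) + 1)) * I3

lemma binom_half (m j : ℕ) (h1 : 1 ≤ j) (h2 : 2 * j ≤ m) :
    m.choose j * (2 * m).choose 2 ≤ m * (2 * m).choose (2 * j) := by
  induction j with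
  | zero => omega
  | succ i ih =>
    rcases Nat.lt_or_ge 1 (i + 1) with h | h
    · have hi1 : 1 ≤ i := by omega
      have hi2 : 2 * i ≤ m := by omega
      have step := binom_step m i (by omega)
      have ihh := ih hi1 hi2
      have hp : 0 < (2 * m).choose (2 * i) := Nat.choose_pos (by omega)
      have t1 : (m.choose (i + 1) * (2 * m).choose 2) * (2 * m).choose (2 * i)
          ≤ (m * (2 * m).choose (2 * (i + 1))) * (2 * m).choose (2 * i) := by
        calc (m.choose (i + 1) * (2 * m).choose 2) * (2 * m).choose (2 * i)
            = (m.choose (i + 1) * (2 * m).choose (2 * i)) * (2 * m).choose 2 := by ring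
          _ ≤ (m.choose i * (2 * m).choose (2 * (i + 1))) * (2 * m).choose 2 :=
              Nat.mul_le_mul_right _ step
          _ = (m.choose i * (2 * m).choose 2) * (2 * m).choose (2 * (i + 1)) := by ring
          _ ≤ (m * (2 * m).choose (2 * i)) * (2 * m).choose (2 * (i + 1)) :=
              Nat.mul_le_mul_right _ ihh
          _ = (m * (2 * m).choose (2 * (i + 1))) * (2 * m).choose (2 * i) := by ring
      exact Nat.le_of_mul_le_mul_right t1 hp
    · have : i = 0 := by omega
      subst this
      rw [Nat.choose_one_right, mul_comm]

lemma binom_ineq_half (m j : ℕ) (h1 : 1 ≤ j) (h2 : 2 * j ≤ m) :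
    (2 * m - 1) * m.choose j ≤ (2 * m).choose (2 * j) := by
  have hh := binom_half m j h1 h2
  have hc2 : (2 * m).choose 2 = m * (2 * m - 1) := by
    rw [Nat.choose_two_right]
    have e : 2 * m * (2 * m - 1) = 2 * (m * (2 * m - 1)) := by rw [mul_assoc]
    rw [e, Nat.mul_div_cancel_left _ (by norm_num)]
  rw [hc2] at hh
  have hm : 0 < m := by omega
  apply Nat.le_of_mul_le_mul_left ?_ hm
  calc m * ((2 * m - 1) * m.choose j) = m.choose j * (m * (2 * m - 1)) := by ring
    _ ≤ m * (2 * m).choose (2 * j) := hh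

lemma binom_ineq (m j : ℕ) (h1 : 1 ≤ j) (h2 : j + 1 ≤ m) :
    (2 * m - 1) * m.choose j ≤ (2 * m).choose (2 * j) := by
  rcases le_or_gt (2 * j) m with hle | hgt
  · exact binom_ineq_half m j h1 hle
  · have h1' : 1 ≤ m - j := by omega
    have h2' : 2 * (m - j) ≤ m := by omega
    have hh := binom_ineq_half m (m - j) h1' h2'
    rw [Nat.choose_symm (by omega : j ≤ m)] at hh
    have e : 2 * (m - j) = 2 * m - 2 * j := by omega
    rw [e, Nat.choose_symm (by omega : 2 * j ≤ 2 * m)] at hh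
    exact hh

/-- key eigenvalue bound -/
lemma lam_bound (hn : 4 ∣ n) (hpos : 0 < n) (k : ℕ) (hk1 : 1 ≤ k) (hk2 : k ≤ n) :
    -(n.choose (n / 2) : ℤ) ≤ ((n : ℤ) - 1) * lam n k := by
  have hn2 : 2 ∣ n := dvd_trans (by norm_num) hn
  set m := n / 2 with hmdef
  have hnm : n = 2 * m := by omega
  have hmeven : m % 2 = 0 := by omega
  have hrec := reciprocity (n := n) hn2 k
  have hCk : (0 : ℤ) < (n.choose k : ℤ) := by exact_mod_cast Nat.choose_pos hk2
  have hD : (0 : ℤ) ≤ (n.choose m : ℤ) := Int.natCast_nonneg _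
  rcases Nat.even_or_odd k with he | ho
  · obtain ⟨j, hj⟩ := he
    have hk2j : k = 2 * j := by omega
    subst hk2j
    rw [kap_even] at hrec
    rcases Nat.even_or_odd j with hje | hjo
    · have hsgn : ((-1 : ℤ)) ^ j = 1 := hje.neg_one_pow
      rw [hsgn, one_mul] at hrec
      have hlam : 0 ≤ lam n (2 * j) := by
        by_contra hneg
        push_neg at hneg
        have h1 : (n.choose (2 * j) : ℤ) * lam n (2 * j) < 0 := mul_neg_of_pos_of_neg hCk hneg
        have h2 : (0 : ℤ) ≤ (n.choose (n / 2) : ℤ) * ((n / 2).choose j : ℤ) :=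
          mul_nonneg hD (Int.natCast_nonneg _)
        rw [hrec] at h1
        linarith
      have h1 : (0 : ℤ) ≤ ((n : ℤ) - 1) * lam n (2 * j) := by
        apply mul_nonneg ?_ hlam
        have : (1 : ℤ) ≤ (n : ℤ) := by exact_mod_cast hpos
        linarith
      linarith
    · have hsgn : ((-1 : ℤ)) ^ j = -1 := hjo.neg_one_pow
      rw [hsgn] at hrec
      have hj1 : 1 ≤ j := by omega
      have hjm : j + 1 ≤ m := by
        have hjo' : j % 2 = 1 := Nat.odd_iff.mp hjo
        omega
      have hbin := binom_ineq m j hj1 hjm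
      have hbinZ : ((n : ℤ) - 1) * (m.choose j : ℤ) ≤ ((n.choose (2 * j) : ℤ)) := by
        have h1 : ((2 * m - 1 : ℕ) : ℤ) * (m.choose j : ℤ) ≤ (((2 * m).choose (2 * j) : ℕ) : ℤ) := by
          exact_mod_cast hbin
        have e1 : ((2 * m - 1 : ℕ) : ℤ) = (n : ℤ) - 1 := by
          have : 1 ≤ 2 * m := by omega
          push_cast [this]
          omega
        have e2 : (2 * m).choose (2 * j) = n.choose (2 * j) := by rw [← hnm]
        rw [e1, e2] at h1
        exact h1
      have e : ((n : ℤ) - 1) * lam n (2 * j) * (n.choose (2 * j) : ℤ)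
          = -(((n : ℤ) - 1) * ((n.choose m : ℤ) * (m.choose j : ℤ))) := by
        linear_combination ((n : ℤ) - 1) * hrec
      have hmul := mul_le_mul_of_nonneg_left hbinZ hD
      have final : (-(n.choose m : ℤ)) * (n.choose (2 * j) : ℤ)
          ≤ ((n : ℤ) - 1) * lam n (2 * j) * (n.choose (2 * j) : ℤ) := by
        rw [e]
        nlinarith [hmul]
      exact le_of_mul_le_mul_right final hCk
  · rw [kap_odd _ _ (Nat.odd_iff.mp ho), mul_zero] at hrec
    have hlam : lam n k = 0 := by
      rcases mul_eq_zero.mp hrec with h | h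
      · exact absurd h (by positivity)
      · exact h
    rw [hlam, mul_zero]
    linarith

lemma parseval (S : Finset (Fin n → ℤˣ)) :
    ∑ u : Finset (Fin n), (∑ x ∈ S, chi u x) ^ 2 = 2 ^ n * S.card := by
  classical
  have hterm : ∀ u : Finset (Fin n), (∑ x ∈ S, chi u x) ^ 2
      = ∑ x ∈ S, ∑ y ∈ S, chi u x * chi u y := by
    intro u; rw [sq, Finset.sum_mul_sum]
  simp_rw [hterm]
  rw [Finset.sum_comm]
  have hx : ∀ x ∈ S, ∑ u : Finset (Fin n), ∑ y ∈ S, chi u x * chi u y = 2 ^ n := by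
    intro x hxS
    rw [Finset.sum_comm]
    rw [Finset.sum_congr rfl fun y _ => sum_chi_mul x y]
    rw [Finset.sum_ite_eq S x (fun _ => (2 : ℤ) ^ n), if_pos hxS]
  rw [Finset.sum_congr rfl hx, Finset.sum_const, nsmul_eq_mul, mul_comm]

lemma orth_sum (hn2 : 2 ∣ n) (hpos : 0 < n) (S : Finset (Fin n → ℤˣ))
    (hS : ∀ x ∈ S, ∀ y ∈ S, ¬ ((x ≠ y) ∧ ∑ i, ((x i : ℤ) * (y i : ℤ)) = 0)) :
    ∑ u : Finset (Fin n),
      (∑ z ∈ univ.filter (fun z : Fin n → ℤˣ => wt z = n / 2), chi u z)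
        * (∑ x ∈ S, chi u x) ^ 2 = 0 := by
  classical
  have hterm : ∀ u : Finset (Fin n),
      (∑ z ∈ univ.filter (fun z : Fin n → ℤˣ => wt z = n / 2), chi u z)
        * (∑ x ∈ S, chi u x) ^ 2
      = ∑ z ∈ univ.filter (fun z : Fin n → ℤˣ => wt z = n / 2),
          ∑ x ∈ S, ∑ y ∈ S, chi u z * (chi u x * chi u y) := by
    intro u
    rw [sq, Finset.sum_mul_sum, Finset.sum_mul]
    simp_rw [Finset.mul_sum]
  simp_rw [hterm]
  rw [Finset.sum_comm]
  refine Finset.sum_eq_zero fun z hz => ?_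
  rw [Finset.sum_comm]
  refine Finset.sum_eq_zero fun x hxS => ?_
  rw [Finset.sum_comm]
  refine Finset.sum_eq_zero fun y hyS => ?_
  have hchi : ∀ u : Finset (Fin n), chi u z * (chi u x * chi u y) = chi u (z * (x * y)) := by
    intro u; rw [chi_mul, chi_mul]
  rw [Finset.sum_congr rfl fun u _ => hchi u, sum_chi]
  rw [if_congr (mul_eq_one_iff z (x * y)) rfl rfl]
  rw [if_neg ?_]
  intro hzeq
  have hwt : wt (x * y) = n / 2 := hzeq ▸ (Finset.mem_filter.mp hz).2
  have hdot : ∑ i, ((x * y) i : ℤ) = 0 := by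
    rw [dot_eq, hwt]
    have h2 : ((n / 2 : ℕ) : ℤ) * 2 = (n : ℤ) := by exact_mod_cast (by omega : n / 2 * 2 = n)
    linarith
  by_cases hxy : x = y
  · subst hxy
    have hone : ∀ i, (((x * x) i : ℤˣ) : ℤ) = 1 := by
      intro i
      rw [Pi.mul_apply, Int.units_mul_self, Units.val_one]
    rw [Finset.sum_congr rfl fun i _ => hone i, Finset.sum_const, nsmul_eq_mul, mul_one] at hdot
    have : (n : ℤ) ≠ 0 := by exact_mod_cast hpos.ne'
    simp only [Finset.card_univ, Fintype.card_fin] at hdot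
    exact this hdot
  · refine hS x hxS y hyS ⟨hxy, ?_⟩
    rw [← hdot]
    exact Finset.sum_congr rfl fun i _ => by rw [Pi.mul_apply, Units.val_mul]

end OmegaAux

/-- For n a positive multiple of 4, every independent set in Ω_n has size at most 2^n/n. -/
theorem omega_indep_bound (n : ℕ) (hn : 4 ∣ n) (hpos : 0 < n)
    (S : Finset (Fin n → ℤˣ)) (hS : ∀ x ∈ S, ∀ y ∈ S, ¬ (Omega n).Adj x y) :
    (S.card : ℝ) ≤ (2 : ℝ) ^ n / (n : ℝ) := by
  classical
  have hn2 : 2 ∣ n := dvd_trans (by norm_num) hn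
  have hnR : (0 : ℝ) < (n : ℝ) := by exact_mod_cast hpos
  rcases Nat.eq_zero_or_pos S.card with hc0 | hcpos
  · rw [hc0]
    simp only [Nat.cast_zero]
    positivity
  · have key : (n : ℤ) * S.card ≤ 2 ^ n := by
      set a : Finset (Fin n) → ℤ := fun u => ∑ x ∈ S, OmegaAux.chi u x with ha
      set L : Finset (Fin n) → ℤ := fun u =>
        ∑ z ∈ Finset.univ.filter (fun z : Fin n → ℤˣ => OmegaAux.wt z = n / 2),
          OmegaAux.chi u z with hL
      have horth : ∑ u : Finset (Fin n), L u * a u ^ 2 = 0 := by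
        apply OmegaAux.orth_sum hn2 hpos S
        intro x hx y hy hcon
        exact hS x hx y hy hcon
      have hpars : ∑ u : Finset (Fin n), a u ^ 2 = 2 ^ n * S.card := OmegaAux.parseval S
      set D : ℤ := (n.choose (n / 2) : ℤ) with hDdef
      have hDpos : (0 : ℤ) < D := by
        rw [hDdef]
        exact_mod_cast Nat.choose_pos (by omega : n / 2 ≤ n)
      have hL0 : L ∅ = D := by
        rw [hL]
        simp only [OmegaAux.chi, Finset.prod_empty]
        rw [Finset.sum_const, OmegaAux.card_wt_filter, nsmul_eq_mul, mul_one, hDdef]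
      have ha0 : a ∅ = S.card := by
        rw [ha]
        simp [OmegaAux.chi]
      have hsplit : ∑ u : Finset (Fin n), L u * a u ^ 2
          = L ∅ * a ∅ ^ 2 + ∑ u ∈ (Finset.univ : Finset (Finset (Fin n))).erase ∅,
            L u * a u ^ 2 := (Finset.add_sum_erase _ _ (Finset.mem_univ ∅)).symm
      have hsplit2 : ∑ u : Finset (Fin n), a u ^ 2
          = a ∅ ^ 2 + ∑ u ∈ (Finset.univ : Finset (Finset (Fin n))).erase ∅, a u ^ 2 :=
        (Finset.add_sum_erase _ _ (Finset.mem_univ ∅)).symm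
      have hrest : ∑ u ∈ (Finset.univ : Finset (Finset (Fin n))).erase ∅, a u ^ 2
          = 2 ^ n * S.card - (S.card : ℤ) ^ 2 := by
        rw [hsplit2, ha0] at hpars
        linarith
      have hbound : ∀ u ∈ (Finset.univ : Finset (Finset (Fin n))).erase ∅,
          (-D) * a u ^ 2 ≤ (((n : ℤ) - 1) * L u) * a u ^ 2 := by
        intro u hu
        have hune : u ≠ ∅ := (Finset.mem_erase.mp hu).1
        have hc1 : 1 ≤ u.card := Finset.card_pos.mpr (Finset.nonempty_iff_ne_empty.mpr hune)
        have hc2 : u.card ≤ n := by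
          have := Finset.card_le_univ u
          simpa using this
        have hLu : L u = OmegaAux.lam n u.card := OmegaAux.lamSum_eq u
        have hlb := OmegaAux.lam_bound hn hpos u.card hc1 hc2
        rw [hLu, hDdef]
        exact mul_le_mul_of_nonneg_right hlb (by positivity)
      have hsum_bound := Finset.sum_le_sum hbound
      have hrestL : ∑ u ∈ (Finset.univ : Finset (Finset (Fin n))).erase ∅, L u * a u ^ 2
          = -(D * (S.card : ℤ) ^ 2) := by
        rw [hsplit, hL0, ha0] at horth
        linarith
      have hRHS : ∑ u ∈ (Finset.univ : Finset (Finset (Fin n))).erase ∅,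
          (((n : ℤ) - 1) * L u) * a u ^ 2 = ((n : ℤ) - 1) * -(D * (S.card : ℤ) ^ 2) := by
        rw [← hrestL, Finset.mul_sum]
        exact Finset.sum_congr rfl fun u _ => by ring
      have hLHS : ∑ u ∈ (Finset.univ : Finset (Finset (Fin n))).erase ∅,
          (-D) * a u ^ 2 = -D * (2 ^ n * S.card - (S.card : ℤ) ^ 2) := by
        rw [← Finset.mul_sum, hrest]
      rw [hLHS, hRHS] at hsum_bound
      have hcZ : (0 : ℤ) < (S.card : ℤ) := by exact_mod_cast hcpos
      have h9 : D * ((n : ℤ) * S.card) * S.card ≤ D * 2 ^ n * S.card := by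
        nlinarith [hsum_bound]
      have h10 : D * ((n : ℤ) * S.card) ≤ D * 2 ^ n := le_of_mul_le_mul_right h9 hcZ
      exact le_of_mul_le_mul_left h10 hDpos
    have keyR : (n : ℝ) * S.card ≤ 2 ^ n := by exact_mod_cast key
    rw [le_div_iff₀ hnR]
    linarith
end

section
/- Clique-coclique bound for Cayley graphs: if X is a Cayley graph on a finite group G, then α(X)·ω(X) ≤ |G|, where α is the independence number and ω the clique number. -/
/-- The Cayley graph of a group `G` with connection set `D` (symmetric and not
containing the identity): `a ∼ b` iff `b * a⁻¹ ∈ D`. -/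
def cayleyGraph {G : Type*} [Group G] (D : Set G)
    (hsym : ∀ g ∈ D, g⁻¹ ∈ D) (hid : (1 : G) ∉ D) : SimpleGraph G where
  Adj a b := b * a⁻¹ ∈ D
  symm := by
    constructor
    intro a b h
    simpa [mul_inv_rev] using hsym _ h
  loopless := by
    constructor
    intro a h
    simp only [mul_inv_cancel] at h
    exact hid h

/-- Clique–coclique bound for Cayley graphs: `α(X)·ω(X) ≤ |G|`, stated as: the
product of the size of any independent set with the size of any clique is at
most `|G|`. -/
theorem cayley_clique_coclique {G : Type*} [Group G] [Fintype G] [DecidableEq G]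
    (D : Set G) (hsym : ∀ g ∈ D, g⁻¹ ∈ D) (hid : (1 : G) ∉ D)
    (S : Finset G) (hS : ∀ x ∈ S, ∀ y ∈ S, ¬ (cayleyGraph D hsym hid).Adj x y)
    (C : Finset G) (hC : (cayleyGraph D hsym hid).IsClique (C : Set G)) :
    S.card * C.card ≤ Fintype.card G := by
  classical
  have key : Set.InjOn (fun p : G × G => p.2⁻¹ * p.1) (S ×ˢ C : Finset (G × G)) := by
    rintro ⟨s₁, c₁⟩ h₁ ⟨s₂, c₂⟩ h₂ h
    simp only [Finset.mem_coe, Finset.mem_product] at h₁ h₂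
    simp only at h
    by_cases hs : s₁ = s₂
    · subst hs
      have : c₁ = c₂ := by
        have := congrArg (fun x => x * s₁⁻¹) h
        simp at this
        exact this
      simp [this]
    · exfalso
      have hcc : c₁ ≠ c₂ := by
        rintro rfl
        exact hs (by simpa using congrArg (fun x => c₁ * x) h)
      have hadjC : (cayleyGraph D hsym hid).Adj c₁ c₂ :=
        hC (Finset.mem_coe.mpr h₁.2) (Finset.mem_coe.mpr h₂.2) hcc
      have hrel : s₂ * s₁⁻¹ = c₂ * c₁⁻¹ := by
        have := congrArg (fun x => c₂ * x * s₁⁻¹) h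
        simpa [mul_assoc] using this.symm
      have : (cayleyGraph D hsym hid).Adj s₁ s₂ := by
        show s₂ * s₁⁻¹ ∈ D
        rw [hrel]
        exact hadjC
      exact hS _ h₁.1 _ h₂.1 this
  calc S.card * C.card = (S ×ˢ C).card := (Finset.card_product S C).symm
    _ ≤ Finset.univ.card := Finset.card_le_card_of_injOn _ (fun _ _ => Finset.mem_univ _) key
    _ = Fintype.card G := Finset.card_univ
end

section
/- Let n be a power of 2. Then χ(Ω_n) = n if and only if α(Ω_n) = 2^n/n. -/
/-- The independence number of a finite graph. -/
noncomputable def indepNum {V : Type*} [Fintype V] (X : SimpleGraph V) : ℕ :=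
  sSup {k | ∃ S : Finset V, S.card = k ∧ ∀ x ∈ S, ∀ y ∈ S, ¬ X.Adj x y}

/-- Sylvester–Hadamard: for every `k` there are `2^k` mutually orthogonal `±1`-vectors. -/
lemma exists_hadamard (k : ℕ) : ∃ f : Fin (2 ^ k) → Fin (2 ^ k) → ℤˣ,
    ∀ i i', i ≠ i' → ∑ j, ((f i j : ℤ) * (f i' j : ℤ)) = 0 := by
  induction k with
  | zero =>
    exact ⟨fun _ _ => 1, fun i i' h => absurd (Fin.ext (by omega)) h⟩
  | succ k ih =>
    obtain ⟨f, hf⟩ := ih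
    have e2 : Fin (2 ^ k) × Fin 2 ≃ Fin (2 ^ (k + 1)) :=
      finProdFinEquiv.trans (finCongr (pow_succ 2 k).symm)
    set w : Fin 2 → Fin 2 → ℤˣ := fun b c => if b = 1 ∧ c = 1 then -1 else 1 with hw
    have hwsum : ∀ b b' : Fin 2, b ≠ b' → ∑ c, ((w b c : ℤ) * (w b' c : ℤ)) = 0 := by decide
    refine ⟨fun i j => f (e2.symm i).1 (e2.symm j).1 * w (e2.symm i).2 (e2.symm j).2,
      fun i i' hii' => ?_⟩
    have key : ∀ F : Fin (2 ^ (k + 1)) → ℤ, ∑ j, F j = ∑ p : Fin (2 ^ k) × Fin 2, F (e2 p) :=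
      fun F => (Fintype.sum_equiv e2 (fun p => F (e2 p)) F (fun p => rfl)).symm
    rw [key]
    have : ∀ p : Fin (2 ^ k) × Fin 2,
        ((f (e2.symm i).1 (e2.symm (e2 p)).1 * w (e2.symm i).2 (e2.symm (e2 p)).2 : ℤˣ) : ℤ) *
        ((f (e2.symm i').1 (e2.symm (e2 p)).1 * w (e2.symm i').2 (e2.symm (e2 p)).2 : ℤˣ) : ℤ) =
        (((f (e2.symm i).1 p.1 : ℤˣ) : ℤ) * ((f (e2.symm i').1 p.1 : ℤˣ) : ℤ)) *
        (((w (e2.symm i).2 p.2 : ℤˣ) : ℤ) * ((w (e2.symm i').2 p.2 : ℤˣ) : ℤ)) := by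
      intro p
      rw [Equiv.symm_apply_apply]
      push_cast
      ring
    rw [Finset.sum_congr rfl (fun p _ => this p)]
    rw [Fintype.sum_prod_type]
    have hfac : ∀ a : Fin (2 ^ k),
        (∑ c : Fin 2, (((f (e2.symm i).1 a : ℤˣ) : ℤ) * ((f (e2.symm i').1 a : ℤˣ) : ℤ)) *
          (((w (e2.symm i).2 c : ℤˣ) : ℤ) * ((w (e2.symm i').2 c : ℤˣ) : ℤ))) =
        (((f (e2.symm i).1 a : ℤˣ) : ℤ) * ((f (e2.symm i').1 a : ℤˣ) : ℤ)) *
          ∑ c : Fin 2, (((w (e2.symm i).2 c : ℤˣ) : ℤ) * ((w (e2.symm i').2 c : ℤˣ) : ℤ)) :=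
      fun a => (Finset.mul_sum _ _ _).symm
    rw [Finset.sum_congr rfl (fun a _ => hfac a)]
    by_cases hA : (e2.symm i).1 = (e2.symm i').1
    · have hB : (e2.symm i).2 ≠ (e2.symm i').2 := by
        intro hB
        apply hii'
        have : e2.symm i = e2.symm i' := Prod.ext hA hB
        exact e2.symm.injective this
      rw [Finset.sum_congr rfl (fun a _ => by rw [hwsum _ _ hB, mul_zero])]
      simp
    · have : ∀ a ∈ Finset.univ, (((f (e2.symm i).1 a : ℤˣ) : ℤ) * ((f (e2.symm i').1 a : ℤˣ) : ℤ)) *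
          (∑ c : Fin 2, (((w (e2.symm i).2 c : ℤˣ) : ℤ) * ((w (e2.symm i').2 c : ℤˣ) : ℤ))) =
          (((f (e2.symm i).1 a : ℤˣ) : ℤ) * ((f (e2.symm i').1 a : ℤˣ) : ℤ)) *
          (∑ c : Fin 2, (((w (e2.symm i).2 c : ℤˣ) : ℤ) * ((w (e2.symm i').2 c : ℤˣ) : ℤ))) :=
        fun _ _ => rfl
      rw [← Finset.sum_mul, hf _ _ hA, zero_mul]

/-- Coordinatewise identity: if `v = c * s` and `w = c * t` then `s i * t i = v i * w i`. -/
lemma coord_eq (c s t : ℤˣ) : ((c * s : ℤˣ) : ℤ) * ((c * t : ℤˣ) : ℤ) = (s : ℤ) * (t : ℤ) := by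
  rcases Int.units_eq_one_or c with h | h <;> subst h <;> push_cast <;> ring

/-- Key injectivity: clique times independent set maps injectively into the group. -/
lemma key_inj {n : ℕ} (hn : 0 < n) (f : Fin n → Fin n → ℤˣ)
    (hf : ∀ i i', i ≠ i' → ∑ j, ((f i j : ℤ) * (f i' j : ℤ)) = 0)
    (S : Finset (Fin n → ℤˣ)) (hS : ∀ x ∈ S, ∀ y ∈ S, ¬ (Omega n).Adj x y) :
    Function.Injective (fun p : Fin n × {x // x ∈ S} => f p.1 * (p.2 : Fin n → ℤˣ)) := by
  have hfinj : Function.Injective f := by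
    intro i i' h
    by_contra hne
    have h0 := hf i i' hne
    rw [h] at h0
    have : ∀ j, ((f i' j : ℤ) * (f i' j : ℤ)) = 1 := fun j => by
      rcases Int.units_eq_one_or (f i' j) with h | h <;> simp [h]
    rw [Finset.sum_congr rfl (fun j _ => this j)] at h0
    simp at h0
    omega
  rintro ⟨i, s, hs⟩ ⟨i', t, ht⟩ h
  simp only at h
  by_cases hii' : i = i'
  · subst hii'
    have : s = t := mul_left_cancel h
    simp [this]
  · exfalso
    have hst : s ≠ t := by
      intro hst
      subst hst
      exact hii' (hfinj (mul_right_cancel h))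
    apply hS s hs t ht
    refine ⟨hst, ?_⟩
    have hco : ∀ j, (s j : ℤ) * (t j : ℤ) = (f i j : ℤ) * (f i' j : ℤ) := by
      intro j
      have hj : f i j * s j = f i' j * t j := congrFun h j
      rcases Int.units_eq_one_or (f i j) with h1 | h1 <;>
        rcases Int.units_eq_one_or (f i' j) with h2 | h2 <;>
        rcases Int.units_eq_one_or (s j) with h3 | h3 <;>
        rcases Int.units_eq_one_or (t j) with h4 | h4 <;>
        simp [h1, h2, h3, h4] at hj ⊢
    rw [Finset.sum_congr rfl (fun j _ => hco j)]
    exact hf i i' hii'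

/-- For n a power of 2, χ(Ω_n) = n iff α(Ω_n) = 2^n/n. -/
theorem omega_chromatic_iff_indep (n : ℕ) (hn : ∃ k : ℕ, n = 2 ^ k) :
    (Omega n).chromaticNumber = (n : ℕ∞) ↔ indepNum (Omega n) * n = 2 ^ n := by
  obtain ⟨k, rfl⟩ := hn
  set n := 2 ^ k with hnk
  have hn0 : 0 < n := pow_pos (by norm_num) k
  obtain ⟨f, hf⟩ := exists_hadamard k
  have hcardV : Fintype.card (Fin n → ℤˣ) = 2 ^ n := by
    simp [Fintype.card_fun, Fintype.card_units_int]
  set A : Set ℕ :=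
    {m | ∃ S : Finset (Fin n → ℤˣ), S.card = m ∧ ∀ x ∈ S, ∀ y ∈ S, ¬ (Omega n).Adj x y} with hA
  have hAne : A.Nonempty := ⟨0, ∅, rfl, by simp⟩
  have hAbdd : BddAbove A := by
    refine ⟨2 ^ n, fun m hm => ?_⟩
    obtain ⟨S, hScard, _⟩ := hm
    calc m = S.card := hScard.symm
      _ ≤ Fintype.card (Fin n → ℤˣ) := S.card_le_univ
      _ = 2 ^ n := hcardV
  -- the independence number is attained
  have hattain : indepNum (Omega n) ∈ A := Nat.sSup_mem hAne hAbdd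
  obtain ⟨Smax, hSmax_card, hSmax_ind⟩ := hattain
  -- clique-coclique upper bound: n * |S| ≤ 2^n for any independent S
  have hub : ∀ S : Finset (Fin n → ℤˣ), (∀ x ∈ S, ∀ y ∈ S, ¬ (Omega n).Adj x y) →
      n * S.card ≤ 2 ^ n := by
    intro S hS
    have hinj := key_inj hn0 f hf S hS
    have := Fintype.card_le_of_injective _ hinj
    simpa [Fintype.card_prod, Fintype.card_coe, hcardV] using this
  -- counting lower bound from a coloring: 2^n ≤ m * α
  have hlb : ∀ m : ℕ, (Omega n).Colorable m → 2 ^ n ≤ m * indepNum (Omega n) := by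
    intro m hm
    obtain ⟨c⟩ := hm
    have hfib : ∀ b : Fin m, (Finset.univ.filter (fun v => c v = b)).card ≤
        indepNum (Omega n) := by
      intro b
      apply le_csSup hAbdd
      refine ⟨Finset.univ.filter (fun v => c v = b), rfl, ?_⟩
      intro x hx y hy hadj
      have hx' := (Finset.mem_filter.mp hx).2
      have hy' := (Finset.mem_filter.mp hy).2
      exact c.valid hadj (hx'.trans hy'.symm)
    calc 2 ^ n = (Finset.univ : Finset (Fin n → ℤˣ)).card := by
          rw [Finset.card_univ, hcardV]
      _ = ∑ b : Fin m, (Finset.univ.filter (fun v => c v = b)).card :=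
          Finset.card_eq_sum_card_fiberwise (fun v _ => Finset.mem_univ (c v))
      _ ≤ ∑ _b : Fin m, indepNum (Omega n) := Finset.sum_le_sum (fun b _ => hfib b)
      _ = m * indepNum (Omega n) := by simp [Finset.sum_const, mul_comm]
  constructor
  · -- χ = n → α * n = 2^n
    intro hchi
    have hcol : (Omega n).Colorable n := by
      rw [← SimpleGraph.chromaticNumber_le_iff_colorable, hchi]
    have h1 : 2 ^ n ≤ n * indepNum (Omega n) := hlb n hcol
    have h2 : n * indepNum (Omega n) ≤ 2 ^ n := hSmax_card ▸ hub Smax hSmax_ind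
    rw [mul_comm]
    exact le_antisymm h2 h1
  · -- α * n = 2^n → χ = n
    intro halpha
    -- upper bound: construct an n-coloring
    have hbij : Function.Bijective
        (fun p : Fin n × {x // x ∈ Smax} => f p.1 * (p.2 : Fin n → ℤˣ)) := by
      rw [Fintype.bijective_iff_injective_and_card]
      refine ⟨key_inj hn0 f hf Smax hSmax_ind, ?_⟩
      rw [Fintype.card_prod, Fintype.card_fin, Fintype.card_coe, hSmax_card, hcardV,
        mul_comm]
      exact halpha
    set eqv := Equiv.ofBijective _ hbij with heqv
    have hcol : (Omega n).Colorable n := by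
      refine ⟨SimpleGraph.Coloring.mk (fun v => (eqv.symm v).1) ?_⟩
      intro v w hadj hcv
      -- same color i, v = f i * s, w = f i * t
      have hv : f (eqv.symm v).1 * ((eqv.symm v).2 : Fin n → ℤˣ) = v := eqv.apply_symm_apply v
      have hw : f (eqv.symm w).1 * ((eqv.symm w).2 : Fin n → ℤˣ) = w := eqv.apply_symm_apply w
      set i := (eqv.symm v).1
      set s := ((eqv.symm v).2 : Fin n → ℤˣ)
      set t := ((eqv.symm w).2 : Fin n → ℤˣ)
      have hw' : f i * t = w := by rw [show i = (eqv.symm w).1 from hcv]; exact hw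
      apply hSmax_ind s (eqv.symm v).2.2 t (eqv.symm w).2.2
      refine ⟨?_, ?_⟩
      · intro hst
        exact hadj.1 (by rw [← hv, ← hw', hst])
      · have : ∀ j, (s j : ℤ) * (t j : ℤ) = (v j : ℤ) * (w j : ℤ) := by
          intro j
          rw [← hv, ← hw']
          exact (coord_eq (f i j) (s j) (t j)).symm
        rw [Finset.sum_congr rfl (fun j _ => this j)]
        exact hadj.2
    refine le_antisymm (hcol.chromaticNumber_le) ?_
    rw [SimpleGraph.chromaticNumber_eq_biInf]
    refine le_iInf fun m => le_iInf fun hm => ?_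
    have h1 : 2 ^ n ≤ m * indepNum (Omega n) := hlb m hm
    have hα0 : 0 < indepNum (Omega n) := by
      rcases Nat.eq_zero_or_pos (indepNum (Omega n)) with h | h
      · rw [h, zero_mul] at halpha
        exact absurd halpha.symm (pow_ne_zero n two_ne_zero)
      · exact h
    have : n ≤ m := by
      have h2n : 0 < 2 ^ n := pow_pos (by norm_num) n
      have h3 : 2 ^ n * n ≤ 2 ^ n * m := by
        calc 2 ^ n * n ≤ m * indepNum (Omega n) * n := Nat.mul_le_mul_right n h1
          _ = m * (indepNum (Omega n) * n) := by ring
          _ = m * 2 ^ n := by rw [halpha]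
          _ = 2 ^ n * m := mul_comm _ _
      exact Nat.le_of_mul_le_mul_left h3 h2n
    exact_mod_cast this
end

section
/- For any ±1-vectors x, y, r of length n, the concatenated vectors x^{(r)} = (x, x∘r) and y^{(r)} = (y, y∘r) (where ∘ is entrywise product) are orthogonal in ℝ^{2n} if and only if x and y are orthogonal in ℝ^n; moreover x^{(r)} is orthogonal to y^{(−r)} for all x, y. Consequently, the vertex set of Ω_{2n} is partitioned into 2^{n−1} induced subgraphs each isomorphic to the join Ω_n + Ω_n. -/
/-- The join `X + Y` of two graphs: disjoint union plus all edges in between. -/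
def joinGraph {V W : Type*} (X : SimpleGraph V) (Y : SimpleGraph W) :
    SimpleGraph (V ⊕ W) where
  Adj a b :=
    match a, b with
    | .inl a, .inl b => X.Adj a b
    | .inr a, .inr b => Y.Adj a b
    | _, _ => True
  symm := by
    constructor
    rintro (a | a) (b | b) h <;> simp_all [SimpleGraph.adj_comm]
  loopless := by
    constructor
    rintro (a | a) h <;> simp_all

/-- `x^{(r)}`: the length-2n vector whose first half is `x` and second half is the
entrywise product of `x` and `r`. -/
def ext {n : ℕ} (x r : Fin n → ℤˣ) : Fin (n + n) → ℤˣ :=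
  Fin.append x (fun i => x i * r i)

namespace OmegaAux

variable {n : ℕ}

lemma usq (u : ℤˣ) : (u:ℤ) * (u:ℤ) = 1 := by rcases Int.units_eq_one_or u with h | h <;> simp [h]

lemma usqu (u : ℤˣ) : u * u = 1 := by rcases Int.units_eq_one_or u with h | h <;> simp [h]

lemma u_ne_neg (u : ℤˣ) : u ≠ -u := by
  rcases Int.units_eq_one_or u with h | h <;> simp [h]

@[simp] lemma ext_castAdd (x r : Fin n → ℤˣ) (i : Fin n) :
    ext x r (Fin.castAdd n i) = x i := Fin.append_left _ _ i

@[simp] lemma ext_natAdd (x r : Fin n → ℤˣ) (i : Fin n) :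
    ext x r (Fin.natAdd n i) = x i * r i := Fin.append_right _ _ i

/-- first half -/
def fh (z : Fin (n + n) → ℤˣ) : Fin n → ℤˣ := fun i => z (Fin.castAdd n i)

/-- the ratio of the second half to the first half -/
def rho (z : Fin (n + n) → ℤˣ) : Fin n → ℤˣ :=
  fun i => z (Fin.castAdd n i) * z (Fin.natAdd n i)

@[simp] lemma fh_ext (x r : Fin n → ℤˣ) : fh (ext x r) = x := by
  funext i; simp [fh]

@[simp] lemma rho_ext (x r : Fin n → ℤˣ) : rho (ext x r) = r := by
  funext i; simp only [rho, ext_castAdd, ext_natAdd, ← mul_assoc, usqu, one_mul]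

lemma ext_fh_rho (z : Fin (n + n) → ℤˣ) : ext (fh z) (rho z) = z := by
  funext j
  induction j using Fin.addCases with
  | left i => simp [fh]
  | right i => simp only [ext_natAdd, fh, rho, ← mul_assoc, usqu, one_mul]

lemma ext_inj {x y r s : Fin n → ℤˣ} (h : ext x r = ext y s) : x = y ∧ r = s := by
  constructor
  · rw [← fh_ext x r, h, fh_ext]
  · rw [← rho_ext x r, h, rho_ext]

lemma sum_same (x y r : Fin n → ℤˣ) :
    ∑ i, ((ext x r i : ℤ) * (ext y r i : ℤ)) = 2 * ∑ i, ((x i : ℤ) * (y i : ℤ)) := by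
  rw [Fin.sum_univ_add (f := fun i => ((ext x r i : ℤ) * (ext y r i : ℤ)))]
  have : ∀ i : Fin n, ((ext x r (Fin.natAdd n i) : ℤ) * (ext y r (Fin.natAdd n i) : ℤ))
      = (x i : ℤ) * (y i : ℤ) := by
    intro i
    simp only [ext_natAdd, Units.val_mul]
    linear_combination ((x i : ℤ) * (y i : ℤ)) * usq (r i)
  simp only [ext_castAdd, this]
  ring

lemma sum_opp (x y r : Fin n → ℤˣ) :
    ∑ i, ((ext x r i : ℤ) * (ext y (-r) i : ℤ)) = 0 := by
  rw [Fin.sum_univ_add (f := fun i => ((ext x r i : ℤ) * (ext y (-r) i : ℤ)))]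
  have : ∀ i : Fin n, ((ext x r (Fin.natAdd n i) : ℤ) * (ext y (-r) (Fin.natAdd n i) : ℤ))
      = -((x i : ℤ) * (y i : ℤ)) := by
    intro i
    simp only [ext_natAdd, Units.val_mul, Pi.neg_apply, Units.val_neg]
    linear_combination (-(x i : ℤ) * (y i : ℤ)) * usq (r i)
  simp only [ext_castAdd, this]
  simp


lemma rho_ext_neg (x r : Fin n → ℤˣ) : rho (ext x (-r)) = -r := rho_ext x (-r)

lemma neg_ne_self (hn : 0 < n) (r : Fin n → ℤˣ) : -r ≠ r := by
  intro h
  have := congrFun h ⟨0, hn⟩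
  rw [Pi.neg_apply] at this
  exact u_ne_neg _ this.symm

/-- the class of `r` -/
def S (r : Fin n → ℤˣ) : Set (Fin (n + n) → ℤˣ) := {z | rho z = r ∨ rho z = -r}

lemma mem_S_ext (x r : Fin n → ℤˣ) : ext x r ∈ S r := Or.inl (rho_ext x r)
lemma mem_S_ext_neg (x r : Fin n → ℤˣ) : ext x (-r) ∈ S r := Or.inr (rho_ext x (-r))

noncomputable def isoS' (hn : 0 < n) (r : Fin n → ℤˣ) :
    joinGraph (Omega n) (Omega n) ≃g ((Omega (n + n)).induce (S r)) := by
  refine ⟨⟨?_, ?_, ?_, ?_⟩, ?_⟩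
  · rintro (x | x)
    · exact ⟨ext x r, mem_S_ext x r⟩
    · exact ⟨ext x (-r), mem_S_ext_neg x r⟩
  · rintro ⟨z, hz⟩
    exact if rho z = r then .inl (fh z) else .inr (fh z)
  · rintro (x | x) <;> simp only
    · rw [if_pos (rho_ext x r), fh_ext]
    · rw [if_neg (by rw [rho_ext_neg]; exact neg_ne_self hn r), fh_ext]
  · rintro ⟨z, hz⟩
    rcases hz with h | h
    · dsimp only
      rw [if_pos h]
      refine Subtype.ext ?_
      show ext (fh z) r = z
      rw [← h, ext_fh_rho]
    · dsimp only
      rw [if_neg (by rw [h]; exact neg_ne_self hn r)]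
      refine Subtype.ext ?_
      show ext (fh z) (-r) = z
      rw [← h, ext_fh_rho]
  · rintro (x | x) (y | y)
    · show (Omega (n + n)).Adj (ext x r) (ext y r) ↔ (Omega n).Adj x y
      constructor
      · rintro ⟨hne, hsum⟩
        refine ⟨fun h => hne (by rw [h]), ?_⟩
        rw [sum_same] at hsum; omega
      · rintro ⟨hne, hsum⟩
        exact ⟨fun h => hne (ext_inj h).1, by rw [sum_same, hsum]; ring⟩
    · show (Omega (n + n)).Adj (ext x r) (ext y (-r)) ↔ True
      simp only [iff_true]
      exact ⟨fun h => neg_ne_self hn r ((ext_inj h).2).symm, sum_opp x y r⟩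
    · show (Omega (n + n)).Adj (ext x (-r)) (ext y r) ↔ True
      simp only [iff_true]
      refine ⟨fun h => neg_ne_self hn r ((ext_inj h).2), ?_⟩
      have := sum_opp y x r
      rw [← this]
      exact Finset.sum_congr rfl fun i _ => mul_comm _ _
    · show (Omega (n + n)).Adj (ext x (-r)) (ext y (-r)) ↔ (Omega n).Adj x y
      constructor
      · rintro ⟨hne, hsum⟩
        refine ⟨fun h => hne (by rw [h]), ?_⟩
        rw [sum_same] at hsum; omega
      · rintro ⟨hne, hsum⟩
        exact ⟨fun h => hne (ext_inj h).1, by rw [sum_same, hsum]; ring⟩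


lemma one_ne_negone : (1 : ℤˣ) ≠ -1 := u_ne_neg 1

lemma eq_of_S_eq (hn : 0 < n) {r r' : Fin n → ℤˣ} (h1 : r ⟨0, hn⟩ = 1)
    (h2 : r' ⟨0, hn⟩ = 1) (h : S r = S r') : r = r' := by
  have hm : ext 1 r ∈ S r' := h ▸ mem_S_ext 1 r
  rcases hm with hm | hm <;> rw [rho_ext] at hm
  · exact hm
  · exfalso
    have := congrFun hm ⟨0, hn⟩
    rw [h1, Pi.neg_apply, h2] at this
    exact one_ne_negone this

lemma S_disjoint (hn : 0 < n) {r r' : Fin n → ℤˣ} (h1 : r ⟨0, hn⟩ = 1)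
    (h2 : r' ⟨0, hn⟩ = 1) (hne : r ≠ r') : Disjoint (S r) (S r') := by
  rw [Set.disjoint_left]
  rintro z (h | h) (h' | h')
  · exact hne (h.symm.trans h')
  · have := congrFun (h.symm.trans h') ⟨0, hn⟩
    rw [h1, Pi.neg_apply, h2] at this
    exact one_ne_negone this
  · have := congrFun (h'.symm.trans h) ⟨0, hn⟩
    rw [h2, Pi.neg_apply, h1] at this
    exact one_ne_negone this
  · exact hne (neg_injective (h.symm.trans h'))

lemma card_univ_fun : (Finset.univ : Finset (Fin n → ℤˣ)).card = 2 ^ n := by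
  simp [Finset.card_univ]

lemma card_F (hn : 0 < n) :
    (Finset.univ.filter (fun r : Fin n → ℤˣ => r ⟨0, hn⟩ = 1)).card = 2 ^ (n - 1) := by
  classical
  have hneg : (Finset.univ.filter (fun r : Fin n → ℤˣ => ¬ (r ⟨0, hn⟩ = 1))).card
      = (Finset.univ.filter (fun r : Fin n → ℤˣ => r ⟨0, hn⟩ = 1)).card := by
    apply Finset.card_bij (fun r _ => -r)
    · intro r hr
      simp only [Finset.mem_filter, Finset.mem_univ, true_and] at hr ⊢
      rcases Int.units_eq_one_or (r ⟨0, hn⟩) with h | h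
      · exact absurd h hr
      · rw [Pi.neg_apply, h, neg_neg]
    · intro a _ b _ h; exact neg_injective h
    · intro b hb
      simp only [Finset.mem_filter, Finset.mem_univ, true_and] at hb
      refine ⟨-b, ?_, neg_neg b⟩
      simp only [Finset.mem_filter, Finset.mem_univ, true_and, Pi.neg_apply, hb]
      exact fun h => one_ne_negone h.symm
  have htot : (Finset.univ.filter (fun r : Fin n → ℤˣ => r ⟨0, hn⟩ = 1)).card
      + (Finset.univ.filter (fun r : Fin n → ℤˣ => ¬ (r ⟨0, hn⟩ = 1))).card = 2 ^ n := by
    rw [Finset.card_filter_add_card_filter_not, card_univ_fun]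
  have hpow : 2 ^ n = 2 * 2 ^ (n - 1) := by
    conv_lhs => rw [← Nat.sub_add_cancel hn]
    rw [pow_succ]
    ring
  rw [hneg, hpow] at htot
  refine Nat.eq_of_mul_eq_mul_left (by norm_num : 0 < 2) ?_
  rw [two_mul, htot]

end OmegaAux

open OmegaAux

/-- `x^{(r)} ⟂ y^{(r)}` iff `x ⟂ y`; always `x^{(r)} ⟂ y^{(−r)}`; and consequently
the vertex set of Ω_{2n} is partitioned into 2^{n−1} induced subgraphs, each
isomorphic to the join Ω_n + Ω_n. -/
theorem omega_recursive_structure (n : ℕ) (hn : 0 < n) :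
    (∀ x y r : Fin n → ℤˣ,
        (∑ i, ((ext x r i : ℤ) * (ext y r i : ℤ)) = 0 ↔
          ∑ i, ((x i : ℤ) * (y i : ℤ)) = 0)) ∧
      (∀ x y r : Fin n → ℤˣ, ∑ i, ((ext x r i : ℤ) * (ext y (-r) i : ℤ)) = 0) ∧
      ∃ P : Finset (Set (Fin (n + n) → ℤˣ)),
        P.card = 2 ^ (n - 1) ∧
          (∀ s ∈ P, ∀ t ∈ P, s ≠ t → Disjoint s t) ∧
          ⋃₀ (P : Set (Set (Fin (n + n) → ℤˣ))) = Set.univ ∧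
          ∀ s ∈ P,
            Nonempty (((Omega (n + n)).induce s) ≃g joinGraph (Omega n) (Omega n)) := by
  classical
  refine ⟨fun x y r => by rw [sum_same]; omega, fun x y r => sum_opp x y r, ?_⟩
  set F := Finset.univ.filter (fun r : Fin n → ℤˣ => r ⟨0, hn⟩ = 1) with hF
  refine ⟨F.image S, ?_, ?_, ?_, ?_⟩
  · rw [Finset.card_image_of_injOn, card_F hn]
    intro r hr r' hr' h
    rw [hF, Finset.mem_coe, Finset.mem_filter] at hr hr'
    exact eq_of_S_eq hn hr.2 hr'.2 h
  · intro s hs t ht hst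
    rw [Finset.mem_image] at hs ht
    obtain ⟨r, hr, rfl⟩ := hs
    obtain ⟨r', hr', rfl⟩ := ht
    rw [hF, Finset.mem_filter] at hr hr'
    exact S_disjoint hn hr.2 hr'.2 (fun h => hst (by rw [h]))
  · ext z
    simp only [Set.mem_sUnion, Set.mem_univ, iff_true, Finset.mem_coe, Finset.mem_image]
    by_cases h : rho z ⟨0, hn⟩ = 1
    · exact ⟨S (rho z), ⟨rho z, by rw [hF, Finset.mem_filter]; exact ⟨Finset.mem_univ _, h⟩, rfl⟩,
        Or.inl rfl⟩
    · refine ⟨S (-rho z), ⟨-rho z, ?_, rfl⟩, Or.inr (neg_neg (rho z)).symm⟩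
      rw [hF, Finset.mem_filter]
      refine ⟨Finset.mem_univ _, ?_⟩
      rcases Int.units_eq_one_or (rho z ⟨0, hn⟩) with h' | h'
      · exact absurd h' h
      · rw [Pi.neg_apply, h', neg_neg]
  · intro s hs
    rw [Finset.mem_image] at hs
    obtain ⟨r, _, rfl⟩ := hs
    exact ⟨(isoS' hn r).symm⟩
end

section
/- For n a power of 2 with n ≥ 4: if α(Ω_n) = 2^n/n, then α(Ω_{n/2}) = 2^{n/2}/(n/2). -/
/- ### Auxiliary material -/

lemma indepSet_bddAbove {V : Type*} [Fintype V] (X : SimpleGraph V) :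
    BddAbove {k | ∃ S : Finset V, S.card = k ∧ ∀ x ∈ S, ∀ y ∈ S, ¬ X.Adj x y} := by
  refine ⟨Fintype.card V, ?_⟩
  rintro k ⟨S, rfl, -⟩
  exact S.card_le_univ

lemma card_le_indepNum {V : Type*} [Fintype V] (X : SimpleGraph V) (S : Finset V)
    (hS : ∀ x ∈ S, ∀ y ∈ S, ¬ X.Adj x y) : S.card ≤ indepNum X :=
  le_csSup (indepSet_bddAbove X) ⟨S, rfl, hS⟩

lemma exists_max_indep {V : Type*} [Fintype V] (X : SimpleGraph V) :
    ∃ S : Finset V, S.card = indepNum X ∧ ∀ x ∈ S, ∀ y ∈ S, ¬ X.Adj x y := by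
  have hne : {k | ∃ S : Finset V, S.card = k ∧ ∀ x ∈ S, ∀ y ∈ S, ¬ X.Adj x y}.Nonempty :=
    ⟨0, ∅, by simp, by simp⟩
  have := Nat.sSup_mem hne (indepSet_bddAbove X)
  obtain ⟨S, h1, h2⟩ := this
  exact ⟨S, h1, h2⟩

/-- sign character on `ZMod 2`. -/
def sgn : ZMod 2 → ℤˣ := fun a => if a = 0 then 1 else -1

lemma sgn_add (a b : ZMod 2) : (sgn (a + b) : ℤ) = (sgn a : ℤ) * (sgn b : ℤ) := by
  revert a b; decide

lemma sgn_inj : Function.Injective sgn := by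
  intro a b; revert a b; decide

lemma sgn_add_one (a : ZMod 2) : (sgn (a + 1) : ℤ) = -(sgn a : ℤ) := by
  revert a; decide

lemma char_sum {j : ℕ} (d : Fin j → ZMod 2) (hd : d ≠ 0) :
    ∑ w : Fin j → ZMod 2, ((sgn (∑ i, d i * w i) : ℤ)) = 0 := by
  obtain ⟨i0, hi0⟩ : ∃ i, d i ≠ 0 := by
    by_contra hc; push_neg at hc; exact hd (funext hc)
  have hd1 : d i0 = 1 := by
    have : ∀ a : ZMod 2, a ≠ 0 → a = 1 := by decide
    exact this _ hi0
  set δ : Fin j → ZMod 2 := Pi.single i0 1 with hδ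
  refine Finset.sum_ninvolution
    (fun w : Fin j → ZMod 2 => w + δ) ?_ ?_ (fun _ => Finset.mem_univ _) ?_
  · intro w
    have hsum : ∑ i, d i * (w + δ) i = (∑ i, d i * w i) + 1 := by
      simp only [Pi.add_apply, mul_add, Finset.sum_add_distrib]
      congr 1
      rw [Finset.sum_eq_single i0]
      · simp [hδ, hd1]
      · intro b _ hb; simp [hδ, Pi.single_apply, hb]
      · simp
    rw [hsum, sgn_add_one]; ring
  · intro w hw
    intro hcon
    have h1 := congrFun hcon i0
    simp only [hδ, Pi.add_apply, Pi.single_eq_same] at h1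
    have : ∀ a : ZMod 2, a + 1 ≠ a := by decide
    exact this _ h1
  · intro w
    funext i
    by_cases hi : i = i0
    · subst hi
      simp only [hδ, Pi.add_apply, Pi.single_eq_same]
      have : ∀ a : ZMod 2, a + 1 + 1 = a := by decide
      exact this _
    · simp [hδ, Pi.single_apply, hi]

/-- Clique–coclique bound: any independent set in `Ω_m`, `m = 2^j`, has size at most `2^m/m`. -/
lemma indep_mul_le {j m : ℕ} (hm : 2 ^ j = m) (T : Finset (Fin m → ℤˣ))
    (hT : ∀ x ∈ T, ∀ y ∈ T, ¬ (Omega m).Adj x y) : T.card * m ≤ 2 ^ m := by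
  classical
  have hcard : Fintype.card (Fin j → ZMod 2) = m := by
    simp [ZMod.card, hm]
  let e : (Fin j → ZMod 2) ≃ Fin m := Fintype.equivFinOfCardEq hcard
  let g : (Fin j → ZMod 2) → (Fin m → ℤˣ) := fun v i => sgn (∑ r, v r * (e.symm i) r)
  have gval : ∀ v w, g v (e w) = sgn (∑ r, v r * w r) := by
    intro v w; simp [g]
  have ginj : Function.Injective g := by
    intro v v' hvv'
    funext r
    have := congrFun hvv' (e (Pi.single r 1))
    rw [gval, gval] at this
    have hs : ∀ (u : Fin j → ZMod 2), ∑ s, u s * (Pi.single r 1 : Fin j → ZMod 2) s = u r := by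
      intro u
      rw [Finset.sum_eq_single r]
      · simp
      · intro b _ hb; simp [Pi.single_apply, hb]
      · simp
    rw [hs, hs] at this
    exact sgn_inj this
  have gsum : ∀ v v', v ≠ v' → ∑ i, ((g v i : ℤ) * (g v' i : ℤ)) = 0 := by
    intro v v' hne
    have : ∑ i, ((g v i : ℤ) * (g v' i : ℤ))
        = ∑ w : Fin j → ZMod 2, ((g v (e w) : ℤ) * (g v' (e w) : ℤ)) :=
      (Equiv.sum_comp e (fun i => ((g v i : ℤ) * (g v' i : ℤ)))).symm
    rw [this]
    have : ∀ w, ((g v (e w) : ℤ) * (g v' (e w) : ℤ)) = (sgn (∑ r, (v + v') r * w r) : ℤ) := by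
      intro w
      rw [gval, gval, ← sgn_add]
      congr 1
      simp [add_mul, Finset.sum_add_distrib]
    rw [Finset.sum_congr rfl (fun w _ => this w)]
    apply char_sum
    intro hcon
    apply hne
    funext r
    have := congrFun hcon r
    simp only [Pi.add_apply, Pi.zero_apply] at this
    have h2 : ∀ a b : ZMod 2, a + b = 0 → a = b := by decide
    exact h2 _ _ this
  -- the injection (v, t) ↦ g v * t
  have key : ((Finset.univ : Finset (Fin j → ZMod 2)) ×ˢ T).card ≤
      (Finset.univ : Finset (Fin m → ℤˣ)).card := by
    apply Finset.card_le_card_of_injOn (fun p => g p.1 * p.2)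
    · intro p _; exact Finset.mem_univ _
    · rintro ⟨v, t⟩ hp ⟨v', t'⟩ hp' heq
      simp only [Finset.mem_product, Finset.mem_coe] at hp hp'
      by_cases ht : t = t'
      · subst ht
        have : g v = g v' := mul_right_cancel heq
        exact Prod.ext (ginj this) rfl
      · exfalso
        have hvv' : v ≠ v' := by
          rintro rfl
          exact ht (mul_left_cancel heq)
        have hsum0 : ∑ i, ((g v i : ℤ) * (g v' i : ℤ)) = 0 := gsum v v' hvv'
        have htt' : ∑ i, ((t i : ℤ) * (t' i : ℤ)) ≠ 0 := by
          intro hcon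
          exact hT t hp.2 t' hp'.2 ⟨ht, hcon⟩
        apply htt'
        rw [← hsum0]
        apply Finset.sum_congr rfl
        intro i _
        have hptw : g v i * t i = g v' i * t' i := congrFun heq i
        have : g v i = g v' i * t' i * t i := by
          rw [← hptw, mul_assoc, Int.units_mul_self, mul_one]
        rw [this]
        push_cast
        have h2 : (g v' i : ℤ) * (g v' i : ℤ) = 1 := by
          rw [← Units.val_mul, Int.units_mul_self, Units.val_one]
        linear_combination (-((t i : ℤ) * (t' i : ℤ))) * h2
  have hc1 : ((Finset.univ : Finset (Fin j → ZMod 2)) ×ˢ T).card = m * T.card := by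
    rw [Finset.card_product, Finset.card_univ, hcard]
  have hc2 : (Finset.univ : Finset (Fin m → ℤˣ)).card = 2 ^ m := by
    rw [Finset.card_univ]
    simp [Fintype.card_units_int]
  rw [hc1, hc2] at key
  rw [mul_comm]
  exact key

/-- Join-partition upper bound: any independent set in `Ω_{2m}` has size at most
`2^{m-1} · α(Ω_m)`. -/
lemma two_mul_indep_card_le {m : ℕ} (hm : 0 < m) (S : Finset (Fin (m + m) → ℤˣ))
    (hS : ∀ x ∈ S, ∀ y ∈ S, ¬ (Omega (m + m)).Adj x y) :
    2 * S.card ≤ 2 ^ m * indepNum (Omega m) := by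
  classical
  set t := indepNum (Omega m) with ht
  let A : (Fin (m + m) → ℤˣ) → (Fin m → ℤˣ) := fun x i => x (Fin.castAdd m i)
  let B : (Fin (m + m) → ℤˣ) → (Fin m → ℤˣ) := fun x i => x (Fin.natAdd m i)
  let κ : (Fin (m + m) → ℤˣ) → (Fin m → ℤˣ) := fun x => B x * A x
  have hAB : ∀ x y : Fin (m + m) → ℤˣ, A x = A y → B x = B y → x = y := by
    intro x y h1 h2
    funext i
    refine Fin.addCases (motive := fun i => x i = y i) ?_ ?_ i
    · intro i; exact congrFun h1 i
    · intro i; exact congrFun h2 i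
  have hκ : ∀ (x : Fin (m + m) → ℤˣ) (c : Fin m → ℤˣ), κ x = c → ∀ i, B x i = c i * A x i := by
    intro x c hc i
    have h1 : B x i * A x i = c i := congrFun hc i
    calc B x i = B x i * (A x i * A x i) := by rw [Int.units_mul_self, mul_one]
    _ = (B x i * A x i) * A x i := by rw [mul_assoc]
    _ = c i * A x i := by rw [h1]
  have hsplit : ∀ x y : Fin (m + m) → ℤˣ,
      ∑ i, ((x i : ℤ) * (y i : ℤ))
        = ∑ i, ((A x i : ℤ) * (A y i : ℤ)) + ∑ i, ((B x i : ℤ) * (B y i : ℤ)) :=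
    fun x y => Fin.sum_univ_add (fun i => ((x i : ℤ) * (y i : ℤ)))
  -- each class has at most t elements of S
  have hone : ∀ c : Fin m → ℤˣ, (S.filter (fun x => κ x = c)).card ≤ t := by
    intro c
    set F := S.filter (fun x => κ x = c) with hF
    have hinj : Set.InjOn A F := by
      intro x hx y hy hxy
      simp only [hF, Finset.coe_filter, Set.mem_setOf_eq, Finset.mem_coe] at hx hy
      refine hAB x y hxy ?_
      funext i
      rw [hκ x c hx.2 i, hκ y c hy.2 i, hxy]
    have hind : ∀ a ∈ F.image A, ∀ b ∈ F.image A, ¬ (Omega m).Adj a b := by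
      intro a ha b hb hadj
      obtain ⟨x, hx, rfl⟩ := Finset.mem_image.1 ha
      obtain ⟨y, hy, rfl⟩ := Finset.mem_image.1 hb
      simp only [hF, Finset.mem_filter] at hx hy
      obtain ⟨hne, hsum⟩ := hadj
      refine hS x hx.1 y hy.1 ⟨fun hxy => hne (by rw [hxy]), ?_⟩
      rw [hsplit]
      have hBB : ∑ i, ((B x i : ℤ) * (B y i : ℤ)) = ∑ i, ((A x i : ℤ) * (A y i : ℤ)) := by
        apply Finset.sum_congr rfl
        intro i _
        rw [hκ x c hx.2 i, hκ y c hy.2 i]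
        push_cast
        have h2 : (c i : ℤ) * (c i : ℤ) = 1 := by
          rw [← Units.val_mul, Int.units_mul_self, Units.val_one]
        linear_combination ((A x i : ℤ) * (A y i : ℤ)) * h2
      rw [hBB, hsum, add_zero]
    calc F.card = (F.image A).card := (Finset.card_image_of_injOn hinj).symm
    _ ≤ t := card_le_indepNum (Omega m) _ hind
  -- the classes c and -c cannot both meet S
  have hcross : ∀ c : Fin m → ℤˣ, (S.filter (fun x => κ x = c)).Nonempty →
      (S.filter (fun x => κ x = -c)).Nonempty → False := by
    intro c ⟨x, hx⟩ ⟨y, hy⟩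
    simp only [Finset.mem_filter] at hx hy
    refine hS x hx.1 y hy.1 ⟨?_, ?_⟩
    · rintro rfl
      have hcc : c = -c := hx.2.symm.trans hy.2
      have h0 := congrFun hcc ⟨0, hm⟩
      simp only [Pi.neg_apply] at h0
      rcases Int.units_eq_one_or (c ⟨0, hm⟩) with h | h <;> rw [h] at h0 <;>
        exact absurd h0 (by decide)
    · rw [hsplit]
      have hBB : ∑ i, ((B x i : ℤ) * (B y i : ℤ)) = ∑ i, -((A x i : ℤ) * (A y i : ℤ)) := by
        apply Finset.sum_congr rfl
        intro i _
        rw [hκ x c hx.2 i, hκ y (-c) hy.2 i]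
        simp only [Pi.neg_apply, Units.val_neg]
        push_cast
        have h2 : (c i : ℤ) * (c i : ℤ) = 1 := by
          rw [← Units.val_mul, Int.units_mul_self, Units.val_one]
        linear_combination (-((A x i : ℤ) * (A y i : ℤ))) * h2
      rw [hBB]
      rw [← Finset.sum_add_distrib]
      simp
  -- per-pair bound
  have claim : ∀ c : Fin m → ℤˣ,
      (S.filter (fun x => κ x = c)).card + (S.filter (fun x => κ x = -c)).card ≤ t := by
    intro c
    rcases Finset.eq_empty_or_nonempty (S.filter (fun x => κ x = c)) with hc | hc
    · rw [hc]
      simpa using hone (-c)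
    · rcases Finset.eq_empty_or_nonempty (S.filter (fun x => κ x = -c)) with hc' | hc'
      · rw [hc']
        simpa using hone c
      · exact absurd (hcross c hc hc') (fun h => h)
  -- summing over all classes
  have hsum : S.card = ∑ c : Fin m → ℤˣ, (S.filter (fun x => κ x = c)).card :=
    Finset.card_eq_sum_card_fiberwise (fun x _ => Finset.mem_univ (κ x))
  have hneg : ∑ c : Fin m → ℤˣ, (S.filter (fun x => κ x = -c)).card
      = ∑ c : Fin m → ℤˣ, (S.filter (fun x => κ x = c)).card := by
    apply Fintype.sum_equiv (Equiv.neg (Fin m → ℤˣ))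
    intro c
    simp [Equiv.neg_apply]
  have hcard : Fintype.card (Fin m → ℤˣ) = 2 ^ m := by
    simp [Fintype.card_fun, Fintype.card_units_int]
  calc 2 * S.card
      = ∑ c : Fin m → ℤˣ, (S.filter (fun x => κ x = c)).card
        + ∑ c : Fin m → ℤˣ, (S.filter (fun x => κ x = -c)).card := by
        rw [hneg, ← hsum]; ring
    _ = ∑ c : Fin m → ℤˣ,
        ((S.filter (fun x => κ x = c)).card + (S.filter (fun x => κ x = -c)).card) := by
        rw [Finset.sum_add_distrib]
    _ ≤ ∑ _c : Fin m → ℤˣ, t := Finset.sum_le_sum (fun c _ => claim c)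
    _ = 2 ^ m * t := by
        rw [Finset.sum_const, smul_eq_mul, Finset.card_univ, hcard]

/-- For n a power of 2 with n ≥ 4: if α(Ω_n) = 2^n/n then α(Ω_{n/2}) = 2^{n/2}/(n/2). -/
theorem omega_indep_recursion (n : ℕ) (hn : ∃ k : ℕ, n = 2 ^ k) (h4 : 4 ≤ n)
    (h : indepNum (Omega n) * n = 2 ^ n) :
    indepNum (Omega (n / 2)) * (n / 2) = 2 ^ (n / 2) := by
  obtain ⟨k, rfl⟩ := hn
  obtain ⟨j, rfl⟩ : ∃ j, k = j + 1 := by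
    cases k with
    | zero => norm_num at h4
    | succ j => exact ⟨j, rfl⟩
  have hnm : 2 ^ (j + 1) = 2 ^ j + 2 ^ j := by rw [pow_succ]; omega
  have hdiv : 2 ^ (j + 1) / 2 = 2 ^ j := by rw [pow_succ]; omega
  rw [hdiv]
  rw [hnm] at h
  set m := 2 ^ j with hm
  -- upper bound via clique-coclique
  obtain ⟨T, hTcard, hTind⟩ := exists_max_indep (Omega m)
  have hub : indepNum (Omega m) * m ≤ 2 ^ m := by
    rw [← hTcard]
    exact indep_mul_le hm.symm T hTind
  -- lower bound via the join partition
  obtain ⟨Sm, hScard, hSind⟩ := exists_max_indep (Omega (m + m))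
  have hmpos : 0 < m := by rw [hm]; exact pow_pos (by norm_num) j
  have hlow := two_mul_indep_card_le hmpos Sm hSind
  rw [hScard] at hlow
  have hlb : 2 ^ m ≤ indepNum (Omega m) * m := by
    have h2 : 2 ^ (m + m) = 2 ^ m * 2 ^ m := by rw [pow_add]
    have h3 : 2 ^ m * 2 ^ m ≤ 2 ^ m * (indepNum (Omega m) * m) := by
      calc 2 ^ m * 2 ^ m = indepNum (Omega (m + m)) * (m + m) := by rw [h, h2]
        _ = (2 * indepNum (Omega (m + m))) * m := by ring
        _ ≤ (2 ^ m * indepNum (Omega m)) * m := Nat.mul_le_mul_right m hlow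
        _ = 2 ^ m * (indepNum (Omega m) * m) := by ring
    exact Nat.le_of_mul_le_mul_left h3 (pow_pos (by norm_num) m)
  exact le_antisymm hub hlb
end
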